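/- arXiv:1804.01642 — 6 statements merged into one kernel-verified Lean document; each statement's English description precedes it below -/
import Mathlib

section
/- Let Φ_K(t) = t(1 - (1 - 1/t)^K) for t > 0 and Φ_K(0) = 0 be the expected number of non-empty bins after throwing t balls uniformly and independently into K bins. Then for all integers 0 ≤ a ≤ b ≤ K/20, we have 0.9(b - a) ≤ Φ_K(b) - Φ_K(a) ≤ b - a. -/
/-!
With `q = 1 - 1/K`, the increment `Φ_K(b) - Φ_K(a) = K (q^a - q^b)` is the geometric sum
`∑_{a ≤ i < b} q^i`, because `K (1 - q) = 1`. Each term lies in `[1 - b/K, 1]` by Bernoulli's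
inequality, and `1 - b/K ≥ 19/20` when `b ≤ K/20`.
-/

open Finset

lemma mul_one_sub_pow_sub_mul_one_sub_pow_eq_sum_Ico {x : ℝ} (hx : x ≠ 0) {a b : ℕ} (hab : a ≤ b) :
    x * (1 - (1 - 1 / x) ^ b) - x * (1 - (1 - 1 / x) ^ a) = ∑ i ∈ Ico a b, (1 - 1 / x) ^ i := by
  have hgeom := geom_sum_Ico_mul (1 - 1 / x) hab
  calc x * (1 - (1 - 1 / x) ^ b) - x * (1 - (1 - 1 / x) ^ a)
      = -x * ((1 - 1 / x) ^ b - (1 - 1 / x) ^ a) := by ring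
    _ = ∑ i ∈ Ico a b, (1 - 1 / x) ^ i := by
      rw [← hgeom]
      field_simp
      ring

lemma one_sub_div_le_one_sub_one_div_pow {x : ℝ} (hx : 1 / 2 ≤ x) (n : ℕ) :
    1 - n / x ≤ (1 - 1 / x) ^ n := by
  have hbern := one_add_mul_le_pow (a := -(1 / x)) (by
    rw [neg_le_neg_iff, div_le_iff₀ (by linarith)]; linarith) n
  simpa [sub_eq_add_neg, div_eq_mul_inv] using hbern

/-- Bi-Lipschitz property of the expected-occupancy function
`Φ_K(t) = K (1 - (1 - 1/K)^t)` on the range `[0, K/20]`. -/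
theorem phi_biLipschitz (K : ℕ) (hK : 0 < K) (a b : ℕ) (hab : a ≤ b)
    (hb : (b : ℝ) ≤ (K : ℝ) / 20) :
    0.9 * ((b : ℝ) - (a : ℝ)) ≤
        (K : ℝ) * (1 - (1 - 1 / (K : ℝ)) ^ b) - (K : ℝ) * (1 - (1 - 1 / (K : ℝ)) ^ a) ∧
      (K : ℝ) * (1 - (1 - 1 / (K : ℝ)) ^ b) - (K : ℝ) * (1 - (1 - 1 / (K : ℝ)) ^ a) ≤
        (b : ℝ) - (a : ℝ) := by
  have hK1 : (1 : ℝ) ≤ K := by exact_mod_cast hK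
  have hq0 : 0 ≤ 1 - 1 / (K : ℝ) := by rw [sub_nonneg, div_le_one₀ (by linarith)]; exact hK1
  have hq1 : 1 - 1 / (K : ℝ) ≤ 1 := sub_le_self _ (by positivity)
  have hterm_ge : ∀ i ∈ Ico a b, 0.9 ≤ (1 - 1 / (K : ℝ)) ^ i := fun i hi => by
    have hi : (i : ℝ) ≤ b := by exact_mod_cast (mem_Ico.mp hi).2.le
    have hiK : (i : ℝ) / K ≤ 1 / 20 := by rw [div_le_iff₀ (by linarith)]; linarith
    linarith [one_sub_div_le_one_sub_one_div_pow (x := K) (by linarith) i]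
  have hterm_le : ∀ i ∈ Ico a b, (1 - 1 / (K : ℝ)) ^ i ≤ 1 := fun i _ => pow_le_one₀ hq0 hq1
  rw [mul_one_sub_pow_sub_mul_one_sub_pow_eq_sum_Ico (by positivity) hab]
  constructor
  · simpa [Nat.cast_sub hab, mul_comm] using card_nsmul_le_sum _ _ _ hterm_ge
  · simpa [Nat.cast_sub hab] using sum_le_card_nsmul _ _ _ hterm_le
end

section
/- For every even p ≥ 2 there are constants C_p, C̃_p such that: if Z_1, …, Z_k are independent non-negative random variables with E[Z_i^s] ≤ μ_i for all 1 ≤ s ≤ p, and Σ_i μ_i ≥ 1, then ‖Σ_i Z_i‖_p ≤ C_p Σ_i μ_i and ‖Σ_i (Z_i - E Z_i)‖_p ≤ C̃_p √(Σ_i μ_i). -/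
/-!
Expanding `(∑ i, W i) ^ n` as a sum over all maps `f : Fin n → ι` of `∏ j, W (f j)`, independence
turns the expectation of each term into a product of moments `𝔼[W i ^ m]`, where `m` is the size
of the fibre of `f` over `i`; these are bounded by `∏ i ∈ range f, ν i`. A map `f` is determined
by `j ↦ (first index with the same value as j)` together with its values at those first indices,
so grouping the maps by the former gives at most `n ^ n` groups, each contributing at most
`(∑ i, ν i) ^ #(range f)`. For the `Z i` this gives `C_p = p`. The centred variables `Z i - 𝔼 Z i`
have moments at most `2 μ i`, and every map with a singleton fibre contributes a factor
`𝔼[Z i - 𝔼 Z i] = 0`, so only maps with `#(range f) ≤ p / 2` survive, which gives the square root.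
-/

open MeasureTheory ProbabilityTheory Finset

section Combinatorics

variable {n : ℕ} {ι : Type*} [DecidableEq ι]

def fiberCard (f : Fin n → ι) (i : ι) : ℕ := #{j | f j = i}

lemma fiberCard_le (f : Fin n → ι) (i : ι) : fiberCard f i ≤ n :=
  (card_filter_le _ _).trans_eq (card_fin n)

lemma fiberCard_pos_iff {f : Fin n → ι} {i : ι} : 0 < fiberCard f i ↔ i ∈ univ.image f := by
  simp [fiberCard, card_pos, Finset.Nonempty]

lemma prod_pow_fiberCard {M : Type*} [CommMonoid M] [Fintype ι] (x : ι → M) (f : Fin n → ι) :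
    ∏ i, x i ^ fiberCard f i = ∏ j, x (f j) := by
  simp only [fiberCard, ← prod_const, prod_fiberwise']

lemma sum_fiberCard_image (f : Fin n → ι) : ∑ i ∈ univ.image f, fiberCard f i = n := by
  simp only [fiberCard]
  rw [← card_eq_sum_card_image, card_univ, Fintype.card_fin]

def firstIndex (f : Fin n → ι) (j : Fin n) : Fin n :=
  ({j' | f j' = f j} : Finset _).min' ⟨j, by simp⟩

lemma apply_firstIndex (f : Fin n → ι) (j : Fin n) : f (firstIndex f j) = f j :=
  (mem_filter.mp (min'_mem {j' | f j' = f j} ⟨j, by simp⟩)).2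

lemma firstIndex_congr (f : Fin n → ι) {j₁ j₂ : Fin n} (h : f j₁ = f j₂) :
    firstIndex f j₁ = firstIndex f j₂ := by
  simp only [firstIndex, h]

lemma firstIndex_firstIndex (f : Fin n → ι) (j : Fin n) :
    firstIndex f (firstIndex f j) = firstIndex f j :=
  firstIndex_congr f (apply_firstIndex f j)

def firstIndices (f : Fin n → ι) : Finset (Fin n) := {j | firstIndex f j = j}

lemma injOn_firstIndices (f : Fin n → ι) : Set.InjOn f (firstIndices f) := by
  intro j₁ h₁ j₂ h₂ h
  rw [← (mem_filter.mp h₁).2, ← (mem_filter.mp h₂).2, firstIndex_congr f h]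

lemma image_firstIndices (f : Fin n → ι) : (firstIndices f).image f = univ.image f := by
  refine (image_subset_image (subset_univ _)).antisymm fun i hi => ?_
  obtain ⟨j, -, rfl⟩ := mem_image.mp hi
  exact mem_image.mpr ⟨firstIndex f j, by simp [firstIndices, firstIndex_firstIndex],
    apply_firstIndex f j⟩

lemma card_firstIndices (f : Fin n → ι) : #(firstIndices f) = #(univ.image f) := by
  rw [← image_firstIndices, card_image_of_injOn (injOn_firstIndices f)]

lemma prod_image_eq_prod_firstIndices {M : Type*} [CommMonoid M] (f : Fin n → ι) (x : ι → M) :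
    ∏ i ∈ univ.image f, x i = ∏ j ∈ firstIndices f, x (f j) := by
  rw [← image_firstIndices, prod_image (injOn_firstIndices f)]

lemma eq_of_firstIndex_eq {f g : Fin n → ι} (h : firstIndex f = firstIndex g)
    (hfg : ∀ j ∈ firstIndices f, f j = g j) : f = g := by
  funext j
  have hj : firstIndex f j ∈ firstIndices f := by simp [firstIndices, firstIndex_firstIndex]
  rw [← apply_firstIndex f j, ← apply_firstIndex g j, hfg _ hj, h]

variable [Fintype ι]

lemma sum_prod_image_fiber_le (ν : ι → ℝ) (hν₀ : 0 ≤ ν) (σ : Fin n → Fin n)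
    (s : Finset (Fin n → ι)) :
    ∑ f ∈ s with firstIndex f = σ, ∏ i ∈ univ.image f, ν i ≤ (∑ i, ν i) ^ #{j | σ j = j} := by
  set S : Finset (Fin n) := {j | σ j = j}
  set fiber := {f ∈ s | firstIndex f = σ}
  have hS : ∀ f ∈ fiber, firstIndices f = S := fun f hf => by
    simp [firstIndices, S, (mem_filter.mp hf).2]
  let restrict (f : Fin n → ι) (j : S) : ι := f j
  calc ∑ f ∈ fiber, ∏ i ∈ univ.image f, ν i
      = ∑ f ∈ fiber, ∏ j : S, ν (restrict f j) := sum_congr rfl fun f hf => by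
        rw [prod_image_eq_prod_firstIndices, hS f hf, ← prod_coe_sort]
    _ = ∑ g ∈ (fiber.image restrict : Finset (S → ι)), ∏ j : S, ν (g j) := by
        rw [sum_image]
        intro f hf g hg hfg
        refine eq_of_firstIndex_eq ?_ fun j hj => ?_
        · rw [(mem_filter.mp hf).2, (mem_filter.mp hg).2]
        · rw [hS f hf] at hj
          exact congrFun hfg ⟨j, hj⟩
    _ ≤ ∑ g : S → ι, ∏ j : S, ν (g j) :=
        sum_le_sum_of_subset_of_nonneg (subset_univ _) fun g _ _ => prod_nonneg fun j _ => hν₀ _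
    _ = (∑ i, ν i) ^ #S := by
        rw [← Fintype.piFinset_univ, ← prod_univ_sum, prod_const, card_univ, Fintype.card_coe]

theorem sum_prod_image_le (ν : ι → ℝ) (hν₀ : 0 ≤ ν) (hν₁ : 1 ≤ ∑ i, ν i) {q : ℕ}
    (s : Finset (Fin n → ι)) (hs : ∀ f ∈ s, #(univ.image f) ≤ q) :
    ∑ f ∈ s, ∏ i ∈ univ.image f, ν i ≤ n ^ n * (∑ i, ν i) ^ q := by
  rw [← sum_fiberwise s firstIndex]
  calc ∑ σ : Fin n → Fin n, ∑ f ∈ s with firstIndex f = σ, ∏ i ∈ univ.image f, ν i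
      ≤ ∑ _σ : Fin n → Fin n, (∑ i, ν i) ^ q := sum_le_sum fun σ _ => by
        obtain hempty | ⟨f, hf⟩ := ({f ∈ s | firstIndex f = σ}).eq_empty_or_nonempty
        · rw [hempty, sum_empty]; positivity
        refine (sum_prod_image_fiber_le ν hν₀ σ s).trans (pow_le_pow_right₀ hν₁ ?_)
        obtain ⟨hfs, rfl⟩ := mem_filter.mp hf
        exact (card_firstIndices f).trans_le (hs f hfs)
    _ = n ^ n * (∑ i, ν i) ^ q := by simp [card_univ]

end Combinatorics

section Moments

variable {Ω ι : Type*} [MeasurableSpace Ω] {P : Measure Ω} [Fintype ι] {n : ℕ} {W : ι → Ω → ℝ}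

lemma integrable_prod_of_memLp [IsFiniteMeasure P] (hW : ∀ i, MemLp (W i) n P)
    (f : Fin n → ι) : Integrable (fun ω => ∏ j, W (f j) ω) P := by
  have hS : MemLp (fun ω => ∑ i, ‖W i ω‖) n P := memLp_finsetSum _ fun i _ => (hW i).norm
  refine hS.integrable_norm_pow'.mono' (aestronglyMeasurable_fun_prod _ fun j _ => (hW _).1)
    (ae_of_all _ fun ω => ?_)
  rw [norm_prod, Real.norm_of_nonneg (sum_nonneg fun i _ => norm_nonneg _)]
  calc ∏ j, ‖W (f j) ω‖ ≤ ∏ _j : Fin n, ∑ i, ‖W i ω‖ := prod_le_prod (fun j _ => norm_nonneg _)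
        fun j _ => single_le_sum (fun i _ => norm_nonneg (W i ω)) (mem_univ _)
    _ = (∑ i, ‖W i ω‖) ^ n := by rw [prod_const, card_univ, Fintype.card_fin]

variable [DecidableEq ι]

lemma sum_pow_eq_sum_prod_pow_fiberCard (x : ι → ℝ) (n : ℕ) :
    (∑ i, x i) ^ n = ∑ f : Fin n → ι, ∏ i, x i ^ fiberCard f i := by
  simp only [sum_pow', Fintype.piFinset_univ, prod_pow_fiberCard]

theorem integral_sum_pow_eq (hind : iIndepFun W P) (hW : ∀ i, MemLp (W i) n P) :
    ∫ ω, (∑ i, W i ω) ^ n ∂P = ∑ f : Fin n → ι, ∏ i, ∫ ω, W i ω ^ fiberCard f i ∂P := by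
  have := hind.isProbabilityMeasure
  simp_rw [sum_pow_eq_sum_prod_pow_fiberCard]
  rw [integral_finsetSum _ fun f _ => by
    simpa only [prod_pow_fiberCard] using integrable_prod_of_memLp hW f]
  exact sum_congr rfl fun f _ => hind.integral_fun_prod_comp (fun i => (hW i).1.aemeasurable)
    fun i => (continuous_pow _).aestronglyMeasurable

variable [IsProbabilityMeasure P]

lemma abs_prod_integral_pow_fiberCard_le (ν : ι → ℝ)
    (hν : ∀ i m, 1 ≤ m → m ≤ n → |∫ ω, W i ω ^ m ∂P| ≤ ν i) (f : Fin n → ι) :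
    |∏ i, ∫ ω, W i ω ^ fiberCard f i ∂P| ≤ ∏ i ∈ univ.image f, ν i := by
  rw [abs_prod, ← prod_subset (subset_univ (univ.image f)) fun i _ hi => ?_]
  · exact prod_le_prod (fun i _ => abs_nonneg _)
      fun i hi => hν i _ (fiberCard_pos_iff.mpr hi) (fiberCard_le f i)
  · rw [Nat.eq_zero_of_not_pos (mt fiberCard_pos_iff.mp hi)]
    simp

theorem abs_integral_sum_pow_le (hind : iIndepFun W P) (hW : ∀ i, MemLp (W i) n P)
    (ν : ι → ℝ) (hν : ∀ i m, 1 ≤ m → m ≤ n → |∫ ω, W i ω ^ m ∂P| ≤ ν i)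
    (s : Finset (Fin n → ι)) (hs : ∀ f ∉ s, ∏ i, ∫ ω, W i ω ^ fiberCard f i ∂P = 0) :
    |∫ ω, (∑ i, W i ω) ^ n ∂P| ≤ ∑ f ∈ s, ∏ i ∈ univ.image f, ν i := by
  rw [integral_sum_pow_eq hind hW, ← sum_subset (subset_univ s) fun f _ hf => hs f hf]
  exact (abs_sum_le_sum_abs _ _).trans
    (sum_le_sum fun f _ => abs_prod_integral_pow_fiberCard_le ν hν f)

theorem abs_integral_sum_pow_le_pow_mul (hind : iIndepFun W P) (hW : ∀ i, MemLp (W i) n P)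
    (ν : ι → ℝ) (hν₀ : 0 ≤ ν) (hν₁ : 1 ≤ ∑ i, ν i)
    (hν : ∀ i m, 1 ≤ m → m ≤ n → |∫ ω, W i ω ^ m ∂P| ≤ ν i) :
    |∫ ω, (∑ i, W i ω) ^ n ∂P| ≤ n ^ n * (∑ i, ν i) ^ n :=
  (abs_integral_sum_pow_le hind hW ν hν univ (by simp)).trans <|
    sum_prod_image_le ν hν₀ hν₁ univ fun f _ => card_image_le.trans_eq (card_fin n)

theorem abs_integral_sum_pow_le_of_integral_eq_zero (hind : iIndepFun W P)
    (hW : ∀ i, MemLp (W i) n P) (hmean : ∀ i, ∫ ω, W i ω ∂P = 0)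
    (ν : ι → ℝ) (hν₀ : 0 ≤ ν) (hν₁ : 1 ≤ ∑ i, ν i)
    (hν : ∀ i m, 1 ≤ m → m ≤ n → |∫ ω, W i ω ^ m ∂P| ≤ ν i) :
    |∫ ω, (∑ i, W i ω) ^ n ∂P| ≤ n ^ n * (∑ i, ν i) ^ (n / 2) := by
  refine (abs_integral_sum_pow_le hind hW ν hν {f | ∀ i ∈ univ.image f, 2 ≤ fiberCard f i}
    fun f hf => ?_).trans (sum_prod_image_le ν hν₀ hν₁ _ fun f hf => ?_)
  · obtain ⟨i, hi, hlt⟩ : ∃ i ∈ univ.image f, fiberCard f i < 2 := by simpa using hf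
    refine prod_eq_zero (mem_univ i) ?_
    have hone : fiberCard f i = 1 := by have := fiberCard_pos_iff.mpr hi; omega
    simpa [hone] using hmean i
  · rw [Nat.le_div_iff_mul_le two_pos]
    calc #(univ.image f) * 2 ≤ ∑ i ∈ univ.image f, fiberCard f i := by
          simpa using card_nsmul_le_sum _ _ _ (mem_filter.mp hf).2
      _ = n := sum_fiberCard_image f

end Moments

section SingleVariable

variable {Ω ι : Type*} [MeasurableSpace Ω] {P : Measure Ω} {p : ℕ}

lemma integrable_pow_of_memLp [IsFiniteMeasure P] {X : Ω → ℝ} (hX : MemLp X p P) {m : ℕ}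
    (hm : m ≤ p) : Integrable (fun ω => X ω ^ m) P :=
  (hX.mono_exponent (by exact_mod_cast hm)).integrable_norm_pow'.mono' (hX.1.pow m)
    (ae_of_all _ fun ω => by simp [norm_pow])

lemma integral_abs_pow_eq_zero_of_not_memLp {X : Ω → ℝ} (hX : AEStronglyMeasurable X P)
    (hp : p ≠ 0) (h : ¬MemLp X p P) : ∫ ω, |X ω| ^ p ∂P = 0 := by
  refine integral_undef fun hint => h ?_
  rw [← integrable_norm_rpow_iff hX (by exact_mod_cast hp) (by simp)]
  simpa [Real.rpow_natCast] using hint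

lemma not_memLp_sum_of_nonneg [Fintype ι] {Z : ι → Ω → ℝ} (hZ₀ : ∀ i ω, 0 ≤ Z i ω)
    {i : ι} (hZi : AEStronglyMeasurable (Z i) P) (h : ¬MemLp (Z i) p P) :
    ¬MemLp (fun ω => ∑ j, Z j ω) p P := fun hsum =>
  h <| hsum.of_le hZi <| ae_of_all _ fun ω => by
    rw [Real.norm_of_nonneg (hZ₀ i ω), Real.norm_of_nonneg (sum_nonneg fun j _ => hZ₀ j ω)]
    exact single_le_sum (fun j _ => hZ₀ j ω) (mem_univ i)

lemma abs_sub_pow_le_add_pow {a b : ℝ} (ha : 0 ≤ a) (hb : 0 ≤ b) (m : ℕ) :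
    |a - b| ^ m ≤ a ^ m + b ^ m := by
  have h : |a - b| ≤ max a b :=
    abs_sub_le_iff.mpr ⟨by linarith [le_max_left a b], by linarith [le_max_right a b]⟩
  rcases max_choice a b with hmax | hmax <;> rw [hmax] at h <;>
    linarith [pow_le_pow_left₀ (abs_nonneg _) h m, pow_nonneg ha m, pow_nonneg hb m]

variable [IsProbabilityMeasure P]

lemma pow_integral_le_integral_pow {Z : Ω → ℝ} (hZ₀ : ∀ ω, 0 ≤ Z ω) (hZ : Integrable Z P)
    {m : ℕ} (hZm : Integrable (fun ω => Z ω ^ m) P) :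
    (∫ ω, Z ω ∂P) ^ m ≤ ∫ ω, Z ω ^ m ∂P :=
  (convexOn_pow m).map_integral_le (continuous_pow m).continuousOn isClosed_Ici
    (ae_of_all _ hZ₀) hZ hZm

lemma abs_integral_sub_integral_pow_le {Z : Ω → ℝ} (hZ₀ : ∀ ω, 0 ≤ Z ω) (hZ : Integrable Z P)
    {m : ℕ} (hZm : Integrable (fun ω => Z ω ^ m) P) :
    |∫ ω, (Z ω - ∫ ω', Z ω' ∂P) ^ m ∂P| ≤ 2 * ∫ ω, Z ω ^ m ∂P := by
  set c := ∫ ω', Z ω' ∂P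
  have hc : 0 ≤ c := integral_nonneg hZ₀
  calc |∫ ω, (Z ω - c) ^ m ∂P| ≤ ∫ ω, |(Z ω - c) ^ m| ∂P := abs_integral_le_integral_abs
    _ ≤ ∫ ω, (Z ω ^ m + c ^ m) ∂P :=
        integral_mono_of_nonneg (ae_of_all _ fun _ => abs_nonneg _)
          (hZm.add (integrable_const _))
          (ae_of_all _ fun ω => (abs_pow _ m).trans_le (abs_sub_pow_le_add_pow (hZ₀ ω) hc m))
    _ = ∫ ω, Z ω ^ m ∂P + c ^ m := by
        rw [integral_add hZm (integrable_const _), integral_const, probReal_univ, one_smul]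
    _ ≤ 2 * ∫ ω, Z ω ^ m ∂P := by linarith [pow_integral_le_integral_pow hZ₀ hZ hZm]

end SingleVariable

lemma rpow_one_div_le_of_le_pow {x D : ℝ} {p : ℕ} (hx : 0 ≤ x) (hD : 0 ≤ D) (hp : p ≠ 0)
    (h : x ≤ D ^ p) : x ^ (1 / (p : ℝ)) ≤ D := by
  rw [one_div, Real.rpow_inv_le_iff_of_pos hx hD (by positivity), Real.rpow_natCast]
  exact h

section MomentBounds

variable {Ω ι : Type*} [MeasurableSpace Ω] {P : Measure Ω} [Fintype ι] {p : ℕ}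
  {Z : ι → Ω → ℝ} {μ : ι → ℝ}

theorem integral_sum_pow_rpow_le (hind : iIndepFun Z P) (hZ₀ : ∀ i ω, 0 ≤ Z i ω)
    (hZ : ∀ i, MemLp (Z i) p P) (hmom : ∀ i s, 1 ≤ s → s ≤ p → ∫ ω, Z i ω ^ s ∂P ≤ μ i)
    (hμ : 1 ≤ ∑ i, μ i) (hp : p ≠ 0) :
    (∫ ω, (∑ i, Z i ω) ^ p ∂P) ^ (1 / (p : ℝ)) ≤ p * ∑ i, μ i := by
  classical
  have := hind.isProbabilityMeasure
  have hν : ∀ i m, 1 ≤ m → m ≤ p → |∫ ω, Z i ω ^ m ∂P| ≤ μ i := fun i m h₁ h₂ => by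
    rw [abs_of_nonneg (integral_nonneg fun ω => pow_nonneg (hZ₀ i ω) m)]
    exact hmom i m h₁ h₂
  have hμ₀ : 0 ≤ μ := fun i => (abs_nonneg _).trans (hν i 1 le_rfl (by omega))
  refine rpow_one_div_le_of_le_pow
    (integral_nonneg fun ω => pow_nonneg (sum_nonneg fun i _ => hZ₀ i ω) p)
    (mul_nonneg p.cast_nonneg (zero_le_one.trans hμ)) hp ?_
  calc ∫ ω, (∑ i, Z i ω) ^ p ∂P ≤ |∫ ω, (∑ i, Z i ω) ^ p ∂P| := le_abs_self _
    _ ≤ p ^ p * (∑ i, μ i) ^ p := abs_integral_sum_pow_le_pow_mul hind hZ μ hμ₀ hμ hν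
    _ = (p * ∑ i, μ i) ^ p := (mul_pow _ _ _).symm

theorem integral_sum_sub_integral_pow_rpow_le (hind : iIndepFun Z P) (hZ₀ : ∀ i ω, 0 ≤ Z i ω)
    (hZ : ∀ i, MemLp (Z i) p P) (hmom : ∀ i s, 1 ≤ s → s ≤ p → ∫ ω, Z i ω ^ s ∂P ≤ μ i)
    (hμ : 1 ≤ ∑ i, μ i) (hp : Even p) (hp₀ : p ≠ 0) :
    (∫ ω, (∑ i, (Z i ω - ∫ ω', Z i ω' ∂P)) ^ p ∂P) ^ (1 / (p : ℝ)) ≤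
      p * √2 * √(∑ i, μ i) := by
  classical
  have := hind.isProbabilityMeasure
  set W : ι → Ω → ℝ := fun i ω => Z i ω - ∫ ω', Z i ω' ∂P
  have hZ₁ : ∀ i, Integrable (Z i) P := fun i => by
    simpa using integrable_pow_of_memLp (hZ i) (m := 1) (by omega)
  have hindW : iIndepFun W P :=
    hind.comp (fun i x => x - ∫ ω', Z i ω' ∂P) fun i => measurable_id.sub_const _
  have hW : ∀ i, MemLp (W i) p P := fun i => (hZ i).sub (memLp_const _)
  have hmean : ∀ i, ∫ ω, W i ω ∂P = 0 := fun i => by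
    simp [W, integral_sub (hZ₁ i) (integrable_const _)]
  have hν : ∀ i m, 1 ≤ m → m ≤ p → |∫ ω, W i ω ^ m ∂P| ≤ 2 * μ i := fun i m h₁ h₂ =>
    (abs_integral_sub_integral_pow_le (hZ₀ i) (hZ₁ i) (integrable_pow_of_memLp (hZ i) h₂)).trans
      (by linarith [hmom i m h₁ h₂])
  have hν₀ : 0 ≤ fun i => 2 * μ i := fun i => (abs_nonneg _).trans (hν i 1 le_rfl (by omega))
  have hν₁ : 1 ≤ ∑ i, 2 * μ i := by rw [← mul_sum]; linarith
  refine rpow_one_div_le_of_le_pow (integral_nonneg fun ω => hp.pow_nonneg _) (by positivity)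
    hp₀ ?_
  calc ∫ ω, (∑ i, W i ω) ^ p ∂P ≤ |∫ ω, (∑ i, W i ω) ^ p ∂P| := le_abs_self _
    _ ≤ p ^ p * (∑ i, 2 * μ i) ^ (p / 2) :=
        abs_integral_sum_pow_le_of_integral_eq_zero hindW hW hmean _ hν₀ hν₁ hν
    _ = (p * √2 * √(∑ i, μ i)) ^ p := by
        obtain ⟨r, rfl⟩ := hp
        have hsqrt : √(2 * ∑ i, μ i) ^ (r + r) = (2 * ∑ i, μ i) ^ r := by
          rw [← two_mul, pow_mul, Real.sq_sqrt (by linarith)]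
        rw [← mul_sum, show (r + r) / 2 = r by omega, mul_assoc, mul_pow _ (√2 * _),
          ← Real.sqrt_mul zero_le_two, hsqrt]

end MomentBounds

/-- For independent non-negative random variables with all moments up to order `p`
bounded by `μ_i`, and `Σ μ_i ≥ 1`, one has `‖Σ Z_i‖_p ≤ C_p Σ μ_i` and
`‖Σ (Z_i - E Z_i)‖_p ≤ C̃_p √(Σ μ_i)`. -/
theorem indep_moment_sum_bounds (p : ℕ) (hpeven : Even p) (hp : 2 ≤ p) :
    ∃ Cp Ctp : ℝ, 0 < Cp ∧ 0 < Ctp ∧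
      ∀ (Ω : Type) (_ : MeasureSpace Ω) (_ : IsProbabilityMeasure (ℙ : Measure Ω))
        (k : ℕ) (Z : Fin k → Ω → ℝ) (μ' : Fin k → ℝ),
        (∀ i, Measurable (Z i)) →
        (∀ i ω, 0 ≤ Z i ω) →
        iIndepFun Z ℙ →
        (∀ i, ∀ s : ℕ, 1 ≤ s → s ≤ p → ∫ ω, (Z i ω) ^ s ≤ μ' i) →
        1 ≤ ∑ i, μ' i →
        (∫ ω, |∑ i, Z i ω| ^ p) ^ (1 / (p : ℝ)) ≤ Cp * ∑ i, μ' i ∧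
        (∫ ω, |∑ i, (Z i ω - ∫ ω', Z i ω')| ^ p) ^ (1 / (p : ℝ)) ≤
          Ctp * Real.sqrt (∑ i, μ' i) := by
  have hp₀ : p ≠ 0 := by omega
  refine ⟨p, p * √2, by positivity, by positivity, ?_⟩
  intro Ω _ _ k Z μ hmeas hZ₀ hind hmom hμ
  by_cases hZ : ∀ i, MemLp (Z i) p
  · simp only [hpeven.pow_abs]
    exact ⟨integral_sum_pow_rpow_le hind hZ₀ hZ hmom hμ hp₀,
      integral_sum_sub_integral_pow_rpow_le hind hZ₀ hZ hmom hμ hpeven hp₀⟩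
  -- otherwise both moments are infinite, and the Bochner integrals take the junk value `0`
  obtain ⟨i, hi⟩ := not_forall.mp hZ
  have hsum := not_memLp_sum_of_nonneg hZ₀ (hmeas i).aestronglyMeasurable hi
  have hcent : ¬MemLp (fun ω => ∑ i, (Z i ω - ∫ ω', Z i ω')) p := fun h => hsum <| by
    convert h.add (memLp_const (∑ i, ∫ ω', Z i ω')) using 1
    ext ω
    simp
  rw [integral_abs_pow_eq_zero_of_not_memLp (by fun_prop) hp₀ hsum,
    integral_abs_pow_eq_zero_of_not_memLp (by fun_prop) hp₀ hcent, Real.zero_rpow (by positivity)]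
  exact ⟨mul_nonneg p.cast_nonneg (zero_le_one.trans hμ), by positivity⟩
end

section
/- Let Z_1, …, Z_k be p-wise independent non-negative random variables satisfying P(Z_i > λ) ≤ μ_i e^{-λ} for all λ ≥ 0, with Σ μ_i ≥ 1. Then there are a universal constant K and a constant C̃_p depending only on p such that for all λ > K, P(Σ_i Z_i > λ Σ_i μ_i) ≤ λ^{-p} (C̃_p / Σ_i μ_i)^{p/2}. -/
/-!
Center the variables: `Y i = Z i - 𝔼 Z i`. Integrating the exponential tail against the
layer-cake formula gives `𝔼 Z_i^s ≤ s! μ_i` (a Gamma integral), hence `|𝔼 Y_i^a| ≤ 2 a! μ_i`,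
using Jensen for `(𝔼 Z_i)^a`. Expanding `𝔼 (∑ Y_i)^p` over maps `g : Fin p → Fin k`,
`p`-wise independence factors each term into `∏ 𝔼 Y_i^(m_i)` over the image of `g`, where `m_i`
is the multiplicity of `i`. A term vanishes as soon as some `m_i = 1`, so only maps whose image
has at most `p / 2` points survive, and since `∑ μ_i ≥ 1` they contribute `O_p((∑ μ_i)^(p/2))`.
For `λ ≥ 2` the event `∑ Z_i > λ ∑ μ_i` forces `∑ Y_i ≥ (λ / 2) ∑ μ_i`, because
`∑ 𝔼 Z_i ≤ ∑ μ_i`, and Markov's inequality for the `p`-th moment concludes.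
-/

open MeasureTheory ProbabilityTheory Real
open scoped ProbabilityTheory

def PWiseIndep {Ω : Type*} [MeasureSpace Ω] {k : ℕ} (p : ℕ) (Z : Fin k → Ω → ℝ) : Prop :=
  ∀ s : Finset (Fin k), s.card ≤ p →
    iIndepFun (fun i : s => Z i) ℙ

open Finset
open scoped Nat

lemma abs_sub_pow_le_pow_add_pow {x y : ℝ} (hx : 0 ≤ x) (hy : 0 ≤ y) (a : ℕ) :
    |x - y| ^ a ≤ x ^ a + y ^ a := by
  have := pow_nonneg hx a
  have := pow_nonneg hy a
  rcases le_total x y with hxy | hxy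
  · calc |x - y| ^ a ≤ y ^ a :=
          pow_le_pow_left₀ (abs_nonneg _) (abs_sub_le_of_nonneg_of_le hx hxy hy le_rfl) a
      _ ≤ x ^ a + y ^ a := by linarith
  · calc |x - y| ^ a ≤ x ^ a :=
          pow_le_pow_left₀ (abs_nonneg _) (abs_sub_le_of_nonneg_of_le hx le_rfl hy hxy) a
      _ ≤ x ^ a + y ^ a := by linarith

section

variable {Ω : Type*} [MeasurableSpace Ω] {μ : Measure Ω} {W : Ω → ℝ} {ν : ℝ}

def ExpTail (μ : Measure Ω) (W : Ω → ℝ) (ν : ℝ) : Prop :=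
  ∀ l : ℝ, 0 ≤ l → (μ {ω | l < W ω}).toReal ≤ ν * exp (-l)

namespace ExpTail

lemma nonneg (h : ExpTail μ W ν) : 0 ≤ ν := by
  simpa using ENNReal.toReal_nonneg.trans (h 0 le_rfl)

variable [IsFiniteMeasure μ]

lemma measure_lt_le (h : ExpTail μ W ν) {l : ℝ} (hl : 0 ≤ l) :
    μ {ω | l < W ω} ≤ ENNReal.ofReal (ν * exp (-l)) :=
  (ENNReal.le_ofReal_iff_toReal_le (measure_ne_top _ _)
    (mul_nonneg h.nonneg (exp_pos _).le)).2 (h l hl)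

lemma lintegral_rpow_le (h : ExpTail μ W ν) (hW : AEMeasurable W μ) (hW0 : 0 ≤ᵐ[μ] W)
    {q : ℝ} (hq : 0 < q) :
    ∫⁻ ω, ENNReal.ofReal (W ω ^ q) ∂μ ≤ ENNReal.ofReal (Gamma (q + 1) * ν) := by
  have hint : IntegrableOn (fun t ↦ ν * (exp (-t) * t ^ (q - 1))) (Set.Ioi 0) :=
    (GammaIntegral_convergent hq).const_mul ν
  have hpos : ∀ᵐ t ∂(volume.restrict (Set.Ioi (0:ℝ))), 0 ≤ ν * (exp (-t) * t ^ (q - 1)) :=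
    (ae_restrict_iff' measurableSet_Ioi).2 <| .of_forall fun t (ht : 0 < t) ↦ by
      have := h.nonneg; positivity
  rw [lintegral_rpow_eq_lintegral_meas_lt_mul μ hW0 hW hq]
  calc ENNReal.ofReal q * ∫⁻ t in Set.Ioi 0, μ {ω | t < W ω} * ENNReal.ofReal (t ^ (q - 1))
      ≤ ENNReal.ofReal q * ∫⁻ t in Set.Ioi 0, ENNReal.ofReal (ν * (exp (-t) * t ^ (q - 1))) := by
        refine mul_le_mul_right (setLIntegral_mono' measurableSet_Ioi fun t (ht : 0 < t) ↦ ?_) _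
        rw [← mul_assoc, ENNReal.ofReal_mul (mul_nonneg h.nonneg (exp_pos _).le)]
        gcongr
        exact h.measure_lt_le ht.le
    _ = ENNReal.ofReal (Gamma (q + 1) * ν) := by
        rw [← ofReal_integral_eq_lintegral_ofReal hint hpos, integral_const_mul,
          ← Gamma_eq_integral hq, ← ENNReal.ofReal_mul hq.le, Gamma_add_one hq.ne']
        ring_nf

lemma integrable_pow (h : ExpTail μ W ν) (hW : AEMeasurable W μ) (hW0 : 0 ≤ᵐ[μ] W) (s : ℕ) :
    Integrable (fun ω ↦ W ω ^ s) μ := by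
  rcases eq_or_ne s 0 with rfl | hs
  · simp
  refine ⟨(hW.pow_const s).aestronglyMeasurable, ?_⟩
  rw [hasFiniteIntegral_iff_ofReal (hW0.mono fun ω hω ↦ pow_nonneg hω s)]
  simp_rw [← rpow_natCast]
  exact (h.lintegral_rpow_le hW hW0 (by positivity)).trans_lt ENNReal.ofReal_lt_top

lemma integral_pow_le (h : ExpTail μ W ν) (hW : AEMeasurable W μ) (hW0 : 0 ≤ᵐ[μ] W)
    {s : ℕ} (hs : s ≠ 0) : ∫ ω, W ω ^ s ∂μ ≤ s ! * ν := by
  have hle := h.lintegral_rpow_le hW hW0 (q := s) (by positivity)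
  simp_rw [rpow_natCast, Gamma_nat_eq_factorial] at hle
  rw [integral_eq_lintegral_of_nonneg_ae (hW0.mono fun ω hω ↦ pow_nonneg hω s)
    (hW.pow_const s).aestronglyMeasurable]
  exact ENNReal.toReal_le_of_le_ofReal (by have := h.nonneg; positivity) hle

lemma integral_le (h : ExpTail μ W ν) (hW : AEMeasurable W μ) (hW0 : 0 ≤ᵐ[μ] W) :
    ∫ ω, W ω ∂μ ≤ ν := by
  simpa using h.integral_pow_le hW hW0 one_ne_zero

lemma memLp (h : ExpTail μ W ν) (hW : AEMeasurable W μ) (hW0 : 0 ≤ᵐ[μ] W) (s : ℕ) :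
    MemLp W s μ := by
  rcases eq_or_ne s 0 with rfl | hs
  · simpa using hW.aestronglyMeasurable
  rw [← integrable_norm_rpow_iff hW.aestronglyMeasurable (by simpa) (by simp)]
  refine (h.integrable_pow hW hW0 s).congr (hW0.mono fun ω hω ↦ ?_)
  simp [abs_of_nonneg hω]

lemma abs_integral_sub_integral_pow_le [IsProbabilityMeasure μ] (h : ExpTail μ W ν)
    (hW : AEMeasurable W μ) (hW0 : 0 ≤ᵐ[μ] W) {a : ℕ} (ha : a ≠ 0) :
    |∫ ω, (W ω - ∫ ω', W ω' ∂μ) ^ a ∂μ| ≤ 2 * a ! * ν := by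
  set c := ∫ ω, W ω ∂μ
  have hc : 0 ≤ c := integral_nonneg_of_ae hW0
  have hWa := h.integrable_pow hW hW0 a
  have jensen : c ^ a ≤ ∫ ω, W ω ^ a ∂μ :=
    (convexOn_pow a).map_integral_le (continuous_pow a).continuousOn isClosed_Ici hW0
      (by simpa using h.integrable_pow hW hW0 1) hWa
  have := h.integral_pow_le hW hW0 ha
  calc |∫ ω, (W ω - c) ^ a ∂μ| ≤ ∫ ω, |W ω - c| ^ a ∂μ := by
        simpa only [abs_pow] using abs_integral_le_integral_abs (f := fun ω ↦ (W ω - c) ^ a)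
    _ ≤ ∫ ω, (W ω ^ a + c ^ a) ∂μ :=
        integral_mono_of_nonneg (.of_forall fun ω ↦ by positivity) (hWa.add (integrable_const _))
          (hW0.mono fun ω hω ↦ abs_sub_pow_le_pow_add_pow hω hc a)
    _ = ∫ ω, W ω ^ a ∂μ + c ^ a := by rw [integral_add hWa (integrable_const _)]; simp
    _ ≤ 2 * a ! * ν := by linarith

end ExpTail

end

lemma sum_powersetCard_prod_le_pow {ι : Type*} [DecidableEq ι] {ν : ι → ℝ} (hν : ∀ i, 0 ≤ ν i)
    (s : Finset ι) (m : ℕ) : ∑ T ∈ s.powersetCard m, ∏ i ∈ T, ν i ≤ (∑ i ∈ s, ν i) ^ m := by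
  induction s using Finset.induction_on generalizing m with
  | empty =>
    cases m with
    | zero => simp
    | succ m => rw [powersetCard_eq_empty.2 (by simp)]; simp
  | insert a s ha ih =>
    cases m with
    | zero => simp
    | succ m =>
      have hs : 0 ≤ ∑ i ∈ s, ν i := sum_nonneg fun i _ ↦ hν i
      have hdisj : Disjoint (s.powersetCard (m + 1)) ((s.powersetCard m).image (insert a)) := by
        simp only [disjoint_left, mem_powersetCard, mem_image]
        rintro _ ⟨hT, -⟩ ⟨T, -, rfl⟩
        exact ha (hT (mem_insert_self a T))
      have hnot : ∀ T ∈ s.powersetCard m, a ∉ T := fun T hT h ↦ ha ((mem_powersetCard.1 hT).1 h)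
      have hinj : Set.InjOn (insert a) (s.powersetCard m : Set (Finset ι)) := fun T hT T' hT' h ↦ by
        rw [← erase_insert (hnot T hT), h, erase_insert (hnot T' hT')]
      have hins : ∀ T ∈ s.powersetCard m, ∏ i ∈ insert a T, ν i = ν a * ∏ i ∈ T, ν i :=
        fun T hT ↦ prod_insert (hnot T hT)
      rw [powersetCard_succ_insert ha, sum_union hdisj, sum_image hinj, sum_congr rfl hins,
        ← mul_sum, sum_insert ha]
      calc ∑ T ∈ s.powersetCard (m + 1), ∏ i ∈ T, ν i + ν a * ∑ T ∈ s.powersetCard m, ∏ i ∈ T, ν i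
          ≤ (∑ i ∈ s, ν i) ^ (m + 1) + ν a * (∑ i ∈ s, ν i) ^ m := by
            gcongr
            exacts [ih _, hν a, ih _]
        _ ≤ (ν a + ∑ i ∈ s, ν i) ^ m * (ν a + ∑ i ∈ s, ν i) := by
            have := hν a
            have : (∑ i ∈ s, ν i) ^ m ≤ (ν a + ∑ i ∈ s, ν i) ^ m := by gcongr; linarith
            rw [pow_succ]; nlinarith
        _ = (ν a + ∑ i ∈ s, ν i) ^ (m + 1) := (pow_succ _ _).symm

section ImageCounting

variable {ι : Type*} [DecidableEq ι] {n : ℕ}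

lemma two_mul_card_image_le {g : Fin n → ι} (hg : ∀ i ∈ univ.image g, 2 ≤ #{j | g j = i}) :
    2 * #(univ.image g) ≤ n := by
  have hcard := card_eq_sum_card_image g univ
  rw [card_univ, Fintype.card_fin] at hcard
  have := card_nsmul_le_sum _ _ _ hg
  rw [smul_eq_mul] at this
  omega

variable [Fintype ι]

lemma card_filter_image_eq_le (T : Finset ι) : #{g : Fin n → ι | univ.image g = T} ≤ #T ^ n := by
  rw [← Fintype.card_piFinset_const]
  refine card_le_card fun g hg ↦ Fintype.mem_piFinset.2 fun j ↦ ?_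
  rw [← (mem_filter.1 hg).2]
  exact mem_image_of_mem g (mem_univ j)

lemma sum_filter_card_le_prod_le {ν : ι → ℝ} (hν : ∀ i, 0 ≤ ν i) (hS : 1 ≤ ∑ i, ν i) (h : ℕ) :
    ∑ T : Finset ι with #T ≤ h, ∏ i ∈ T, ν i ≤ (h + 1) * (∑ i, ν i) ^ h := by
  rw [← sum_fiberwise_of_maps_to (g := card) (t := range (h + 1))
    fun T hT ↦ mem_range_succ_iff.2 (mem_filter.1 hT).2]
  calc ∑ m ∈ range (h + 1), ∑ T ∈ {T : Finset ι | #T ≤ h} with #T = m, ∏ i ∈ T, ν i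
      ≤ ∑ m ∈ range (h + 1), (∑ i, ν i) ^ h := by
        refine sum_le_sum fun m hm ↦ ?_
        calc ∑ T ∈ {T : Finset ι | #T ≤ h} with #T = m, ∏ i ∈ T, ν i
            ≤ ∑ T ∈ univ.powersetCard m, ∏ i ∈ T, ν i :=
              sum_le_sum_of_subset_of_nonneg
                (fun T hT ↦ mem_powersetCard.2 ⟨subset_univ T, (mem_filter.1 hT).2⟩)
                fun T _ _ ↦ prod_nonneg fun i _ ↦ hν i
          _ ≤ (∑ i, ν i) ^ m := sum_powersetCard_prod_le_pow hν univ m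
          _ ≤ (∑ i, ν i) ^ h := pow_le_pow_right₀ hS (mem_range_succ_iff.1 hm)
    _ = (h + 1) * (∑ i, ν i) ^ h := by simp

lemma sum_prod_image_le_s8 {ν : ι → ℝ} (hν : ∀ i, 0 ≤ ν i) (hS : 1 ≤ ∑ i, ν i) (h : ℕ) :
    ∑ g : Fin n → ι with #(univ.image g) ≤ h, ∏ i ∈ univ.image g, ν i ≤
      h ^ n * (h + 1) * (∑ i, ν i) ^ h := by
  set G : Finset (Fin n → ι) := {g | #(univ.image g) ≤ h}
  have hfib : ∀ T ∈ ({T | #T ≤ h} : Finset (Finset ι)),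
      ∑ g ∈ G with univ.image g = T, ∏ i ∈ univ.image g, ν i ≤ h ^ n * ∏ i ∈ T, ν i := by
    intro T hT
    have hcard : #{g ∈ G | univ.image g = T} ≤ h ^ n :=
      calc #{g ∈ G | univ.image g = T} ≤ #{g : Fin n → ι | univ.image g = T} :=
            card_le_card (filter_subset_filter _ (subset_univ G))
        _ ≤ #T ^ n := card_filter_image_eq_le T
        _ ≤ h ^ n := Nat.pow_le_pow_left (mem_filter.1 hT).2 n
    calc ∑ g ∈ G with univ.image g = T, ∏ i ∈ univ.image g, ν i
        = #{g ∈ G | univ.image g = T} * ∏ i ∈ T, ν i := by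
          rw [← nsmul_eq_mul, ← sum_const]
          exact sum_congr rfl fun g hg ↦ by rw [(mem_filter.1 hg).2]
      _ ≤ h ^ n * ∏ i ∈ T, ν i := by
          gcongr
          · exact prod_nonneg fun i _ ↦ hν i
          · exact_mod_cast hcard
  rw [← sum_fiberwise_of_maps_to (t := {T | #T ≤ h}) (g := fun g : Fin n → ι ↦ univ.image g)
    fun g hg ↦ mem_filter.2 ⟨mem_univ _, (mem_filter.1 hg).2⟩]
  calc ∑ T : Finset ι with #T ≤ h, ∑ g ∈ G with univ.image g = T, ∏ i ∈ univ.image g, ν i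
      ≤ ∑ T : Finset ι with #T ≤ h, h ^ n * ∏ i ∈ T, ν i := sum_le_sum hfib
    _ ≤ h ^ n * (h + 1) * (∑ i, ν i) ^ h := by
        rw [← mul_sum, mul_assoc]
        gcongr
        exact sum_filter_card_le_prod_le hν hS h

end ImageCounting

lemma integrable_prod_of_memLp_s8 {Ω : Type*} [MeasurableSpace Ω] {μ : Measure Ω} [IsFiniteMeasure μ]
    {n : ℕ} {f : Fin n → Ω → ℝ} (hf : ∀ j, MemLp (f j) n μ) :
    Integrable (fun ω ↦ ∏ j, f j ω) μ := by
  have hprod := MemLp.prod' (s := univ) fun j _ ↦ hf j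
  rw [← memLp_one_iff_integrable]
  refine hprod.mono_exponent ?_
  simp only [sum_const, card_univ, Fintype.card_fin, nsmul_eq_mul]
  exact ENNReal.one_le_inv.2 (ENNReal.mul_inv_le_one _)

section PWiseIndep

variable {Ω : Type*} [MeasureSpace Ω] {k n : ℕ} {Y : Fin k → Ω → ℝ}

lemma PWiseIndep.comp (hY : PWiseIndep n Y) {f : Fin k → ℝ → ℝ} (hf : ∀ i, Measurable (f i)) :
    PWiseIndep n fun i ↦ f i ∘ Y i :=
  fun s hs ↦ (hY s hs).comp (fun i ↦ f i) fun i ↦ hf i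

lemma PWiseIndep.integral_prod_eq (hY : PWiseIndep n Y) (hmeas : ∀ i, AEMeasurable (Y i))
    (g : Fin n → Fin k) :
    ∫ ω, ∏ j, Y (g j) ω = ∏ i ∈ univ.image g, ∫ ω, Y i ω ^ #{j | g j = i} := by
  have hind := hY (univ.image g) (card_image_le.trans (by simp))
  calc ∫ ω, ∏ j, Y (g j) ω = ∫ ω, ∏ i : univ.image g, Y i ω ^ #{j | g j = i.1} := by
        congr with ω
        rw [prod_comp (fun i ↦ Y i ω) g]
        exact (prod_coe_sort _ _).symm
    _ = ∏ i : univ.image g, ∫ ω, Y i ω ^ #{j | g j = i.1} :=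
        hind.integral_fun_prod_comp (fun i ↦ hmeas i)
          fun i ↦ (continuous_pow _).aestronglyMeasurable
    _ = ∏ i ∈ univ.image g, ∫ ω, Y i ω ^ #{j | g j = i} :=
        prod_coe_sort _ fun i ↦ ∫ ω, Y i ω ^ #{j | g j = i}

lemma PWiseIndep.integral_prod_le {h : ℕ} {ν : Fin k → ℝ} (hY : PWiseIndep (2 * h) Y)
    (hmeas : ∀ i, AEMeasurable (Y i)) (hmean : ∀ i, ∫ ω, Y i ω = 0)
    (hmom : ∀ i a, 2 ≤ a → a ≤ 2 * h → |∫ ω, Y i ω ^ a| ≤ ν i) (hν : ∀ i, 0 ≤ ν i)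
    (g : Fin (2 * h) → Fin k) :
    ∫ ω, ∏ j, Y (g j) ω ≤ if #(univ.image g) ≤ h then ∏ i ∈ univ.image g, ν i else 0 := by
  rw [hY.integral_prod_eq hmeas g]
  by_cases hg : ∀ i ∈ univ.image g, 2 ≤ #{j | g j = i}
  · rw [if_pos (by have := two_mul_card_image_le hg; omega)]
    refine (le_abs_self _).trans ?_
    rw [abs_prod]
    exact prod_le_prod (fun i _ ↦ abs_nonneg _) fun i hi ↦
      hmom i _ (hg i hi) ((card_filter_le _ _).trans (by simp))
  · push Not at hg
    obtain ⟨i, hi, hlt⟩ := hg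
    have hpos : 0 < #{j | g j = i} := by
      obtain ⟨j, -, rfl⟩ := mem_image.1 hi
      exact card_pos.2 ⟨j, by simp⟩
    have hzero : ∫ ω, Y i ω ^ #{j | g j = i} = 0 := by
      rw [show #{j | g j = i} = 1 by omega]
      simpa using hmean i
    rw [prod_eq_zero hi hzero]
    split_ifs
    exacts [prod_nonneg fun i _ ↦ hν i, le_rfl]

theorem PWiseIndep.integral_sum_pow_le [IsProbabilityMeasure (ℙ : Measure Ω)] {h : ℕ}
    {ν : Fin k → ℝ} (hY : PWiseIndep (2 * h) Y) (hLp : ∀ i, MemLp (Y i) (2 * h : ℕ) ℙ)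
    (hmean : ∀ i, ∫ ω, Y i ω = 0)
    (hmom : ∀ i a, 2 ≤ a → a ≤ 2 * h → |∫ ω, Y i ω ^ a| ≤ ν i) (hν : ∀ i, 0 ≤ ν i)
    (hS : 1 ≤ ∑ i, ν i) :
    ∫ ω, (∑ i, Y i ω) ^ (2 * h) ≤ h ^ (2 * h) * (h + 1) * (∑ i, ν i) ^ h := by
  have hmeas : ∀ i, AEMeasurable (Y i) := fun i ↦ (hLp i).aestronglyMeasurable.aemeasurable
  calc ∫ ω, (∑ i, Y i ω) ^ (2 * h) = ∑ g : Fin (2 * h) → Fin k, ∫ ω, ∏ j, Y (g j) ω := by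
        simp_rw [Fintype.sum_pow]
        exact integral_finsetSum _ fun g _ ↦ integrable_prod_of_memLp_s8 fun j ↦ hLp (g j)
    _ ≤ ∑ g : Fin (2 * h) → Fin k,
          if #(univ.image g) ≤ h then ∏ i ∈ univ.image g, ν i else 0 :=
        sum_le_sum fun g _ ↦ hY.integral_prod_le hmeas hmean hmom hν g
    _ = ∑ g : Fin (2 * h) → Fin k with #(univ.image g) ≤ h, ∏ i ∈ univ.image g, ν i :=
        (sum_filter _ _).symm
    _ ≤ h ^ (2 * h) * (h + 1) * (∑ i, ν i) ^ h := by exact_mod_cast sum_prod_image_le_s8 hν hS h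

end PWiseIndep

theorem PWiseIndep.integral_sum_sub_integral_pow_le {Ω : Type*} [MeasureSpace Ω]
    [IsProbabilityMeasure (ℙ : Measure Ω)] {k h : ℕ} {Z : Fin k → Ω → ℝ} {ν : Fin k → ℝ}
    (hZ : PWiseIndep (2 * h) Z) (hmeas : ∀ i, Measurable (Z i)) (hnn : ∀ i ω, 0 ≤ Z i ω)
    (htail : ∀ i, ExpTail ℙ (Z i) (ν i)) (hS : 1 ≤ ∑ i, ν i) :
    ∫ ω, (∑ i, (Z i ω - ∫ ω', Z i ω')) ^ (2 * h) ≤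
      h ^ (2 * h) * (h + 1) * (2 * (2 * h)! * ∑ i, ν i) ^ h := by
  have hZ0 : ∀ i, 0 ≤ᵐ[ℙ] Z i := fun i ↦ ae_of_all _ (hnn i)
  have hD : (1 : ℝ) ≤ 2 * (2 * h)! := by
    have : (1 : ℝ) ≤ (2 * h)! := mod_cast (2 * h).factorial_pos
    linarith
  rw [mul_sum]
  refine PWiseIndep.integral_sum_pow_le (Y := fun i ω ↦ Z i ω - ∫ ω', Z i ω')
    (hZ.comp fun i ↦ measurable_id.sub_const _)
    (fun i ↦ ((htail i).memLp (hmeas i).aemeasurable (hZ0 i) _).sub (memLp_const _))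
    (fun i ↦ ?_) (fun i a ha ha' ↦ ?_) (fun i ↦ ?_) ?_
  · rw [integral_sub ((htail i).integrable_pow (hmeas i).aemeasurable (hZ0 i) 1 |>.congr
      (.of_forall fun ω ↦ pow_one _)) (integrable_const _)]
    simp
  · calc |∫ ω, (Z i ω - ∫ ω', Z i ω') ^ a| ≤ 2 * a ! * ν i :=
          (htail i).abs_integral_sub_integral_pow_le (hmeas i).aemeasurable (hZ0 i) (by omega)
      _ ≤ 2 * (2 * h)! * ν i := by
          have := (htail i).nonneg
          gcongr
  · exact mul_nonneg (by positivity) (htail i).nonneg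
  · rw [← mul_sum]
    nlinarith

lemma measureReal_le_integral_pow_div {Ω : Type*} [MeasurableSpace Ω] {μ : Measure Ω}
    [IsFiniteMeasure μ] {X : Ω → ℝ} {p : ℕ} (hp : Even p) (hX : MemLp X p μ) {t : ℝ}
    (ht : 0 < t) : μ.real {ω | t ≤ X ω} ≤ (∫ ω, X ω ^ p ∂μ) / t ^ p := by
  have hint : Integrable (fun ω ↦ X ω ^ p) μ :=
    hX.integrable_norm_pow'.congr (.of_forall fun ω ↦ by simp [hp.pow_abs])
  rw [le_div_iff₀ (by positivity), mul_comm]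
  calc t ^ p * μ.real {ω | t ≤ X ω} ≤ t ^ p * μ.real {ω | t ^ p ≤ X ω ^ p} :=
        mul_le_mul_of_nonneg_left
          (measureReal_mono fun ω (hω : t ≤ X ω) ↦ pow_le_pow_left₀ ht.le hω p) (by positivity)
    _ ≤ ∫ ω, X ω ^ p ∂μ :=
        mul_meas_ge_le_integral_of_nonneg (.of_forall fun ω ↦ hp.pow_nonneg _) hint _

theorem PWiseIndep.measureReal_lt_sum_le {Ω : Type*} [MeasureSpace Ω]
    [IsProbabilityMeasure (ℙ : Measure Ω)] {k h : ℕ} {Z : Fin k → Ω → ℝ} {ν : Fin k → ℝ}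
    (hZ : PWiseIndep (2 * h) Z) (hmeas : ∀ i, Measurable (Z i)) (hnn : ∀ i ω, 0 ≤ Z i ω)
    (htail : ∀ i, ExpTail ℙ (Z i) (ν i)) (hS : 1 ≤ ∑ i, ν i) {lam : ℝ} (hlam : 2 ≤ lam) :
    (ℙ : Measure Ω).real {ω | lam * ∑ i, ν i < ∑ i, Z i ω} ≤
      2 ^ (2 * h) * h ^ (2 * h) * (h + 1) * (2 * (2 * h)!) ^ h /
        (lam ^ (2 * h) * (∑ i, ν i) ^ h) := by
  set S := ∑ i, ν i
  set Y : Ω → ℝ := fun ω ↦ ∑ i, (Z i ω - ∫ ω', Z i ω')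
  have hZ0 : ∀ i, 0 ≤ᵐ[ℙ] Z i := fun i ↦ ae_of_all _ (hnn i)
  have hY : MemLp Y (2 * h : ℕ) ℙ := memLp_finsetSum _ fun i _ ↦
    ((htail i).memLp (hmeas i).aemeasurable (hZ0 i) _).sub (memLp_const _)
  have hmean : ∑ i, ∫ ω, Z i ω ≤ S :=
    sum_le_sum fun i _ ↦ (htail i).integral_le (hmeas i).aemeasurable (hZ0 i)
  have hsub : {ω | lam * S < ∑ i, Z i ω} ⊆ {ω | lam / 2 * S ≤ Y ω} := by
    intro ω (hω : lam * S < ∑ i, Z i ω)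
    simp only [Set.mem_ofPred, Y, sum_sub_distrib]
    nlinarith
  calc (ℙ : Measure Ω).real {ω | lam * S < ∑ i, Z i ω}
      ≤ (ℙ : Measure Ω).real {ω | lam / 2 * S ≤ Y ω} := measureReal_mono hsub
    _ ≤ (∫ ω, Y ω ^ (2 * h)) / (lam / 2 * S) ^ (2 * h) :=
        measureReal_le_integral_pow_div (even_two_mul h) hY (by positivity)
    _ ≤ h ^ (2 * h) * (h + 1) * (2 * (2 * h)! * S) ^ h / (lam / 2 * S) ^ (2 * h) := by
        gcongr
        exact hZ.integral_sum_sub_integral_pow_le hmeas hnn htail hS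
    _ = 2 ^ (2 * h) * h ^ (2 * h) * (h + 1) * (2 * (2 * h)!) ^ h / (lam ^ (2 * h) * S ^ h) := by
        rw [show lam / 2 * S = lam * S / 2 by ring, div_pow, mul_pow, mul_pow, mul_pow lam,
          pow_mul S]
        field_simp
        ring

/-- Concentration for sums of `p`-wise independent non-negative variables with
exponential tails `P(Z_i > λ) ≤ μ_i e^{-λ}`: for `λ > K`,
`P(Σ Z_i > λ Σ μ_i) ≤ λ^{-p} (C̃_p / Σ μ_i)^{p/2}`. -/
theorem pwise_subexp_concentration :
    ∃ K : ℝ, 0 < K ∧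
      ∀ p : ℕ, Even p → 2 ≤ p →
        ∃ Ctp : ℝ, 0 < Ctp ∧
          ∀ (Ω : Type) (_ : MeasureSpace Ω) (_ : IsProbabilityMeasure (ℙ : Measure Ω))
            (k : ℕ) (Z : Fin k → Ω → ℝ) (μ' : Fin k → ℝ),
            (∀ i, Measurable (Z i)) →
            (∀ i ω, 0 ≤ Z i ω) →
            PWiseIndep p Z →
            (∀ i, ∀ l : ℝ, 0 ≤ l →
              (ℙ {ω | l < Z i ω}).toReal ≤ μ' i * Real.exp (-l)) →
            1 ≤ ∑ i, μ' i →
            ∀ lam : ℝ, K < lam →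
              ℙ {ω | lam * ∑ i, μ' i < ∑ i, Z i ω} ≤
                ENNReal.ofReal (lam ^ (-(p : ℝ)) * (Ctp / ∑ i, μ' i) ^ ((p : ℝ) / 2)) := by
  refine ⟨2, two_pos, fun p hp hp2 ↦ ?_⟩
  obtain ⟨h, rfl⟩ := hp.two_dvd
  set M : ℝ := 2 ^ (2 * h) * h ^ (2 * h) * (h + 1) * (2 * (2 * h)!) ^ h
  have hM : 1 ≤ M := by
    have h1 : (1 : ℝ) ≤ h := mod_cast (by omega : 1 ≤ h)
    have hf : (1 : ℝ) ≤ (2 * h)! := mod_cast (2 * h).factorial_pos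
    calc (1 : ℝ) = 1 * 1 * 1 * 1 := by norm_num
      _ ≤ 2 ^ (2 * h) * h ^ (2 * h) * (h + 1) * (2 * (2 * h)!) ^ h := by
          gcongr <;> first | exact one_le_pow₀ (by linarith) | linarith
  refine ⟨M, by positivity, fun Ω _ _ k Z μ' hmeas hnn hZ htail hS lam hlam ↦ ?_⟩
  rw [← ofReal_measureReal]
  refine ENNReal.ofReal_le_ofReal ((hZ.measureReal_lt_sum_le hmeas hnn htail hS hlam.le).trans ?_)
  rw [rpow_neg (by positivity), show ((2 * h : ℕ) : ℝ) / 2 = h by push_cast; ring, rpow_natCast,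
    rpow_natCast, div_pow, inv_mul_eq_div, div_div, mul_comm ((∑ i, μ' i) ^ h)]
  gcongr
  exact le_self_pow₀ hM (by omega)
end

section
/- Let S ⊆ [n] be a nonempty finite set and let h : [n] → [n] be drawn from a pairwise independent hash family with each h(s) uniform on [n] (n a power of 2). Define Ŷ = max_{s ∈ S} lsb(h(s)) - log₂|S|, where lsb(x) is the index of the least significant set bit of x (so P(lsb(h(s)) ≥ k) = 2^{-k}). Then there is a universal constant C such that for all λ ≥ 0: P(Ŷ > λ) ≤ C·2^{-λ} and P(Ŷ < -λ) ≤ C·2^{-λ}. -/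
open MeasureTheory ProbabilityTheory Real
open scoped ProbabilityTheory

/-- The least-significant-bit index of `x` in a universe of size `2^m`
(with the convention `lsb 0 = m`, so that `P(lsb ≥ k) = 2^{-k}` for `k ≤ m`). -/
def lsb (m x : ℕ) : ℕ := if x = 0 then m else padicValNat 2 x

/-!
Let `A_k(s)` be the event `lsb(h(s)) ≥ k`; it has probability `2^{-k}` because exactly `2^{m-k}`
points of `[2^m]` are divisible by `2^k`. The maximum `Z` of the `lsb(h(s))` is `≥ k` exactly when
some `A_k(s)` occurs, so a union bound gives `P(Z ≥ k) ≤ |S| 2^{-k}`. It is `< k` exactly when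
`N = ∑ₛ 1_{A_k(s)}` vanishes; pairwise uniformity makes the `h(s)` pairwise independent, so
`Var N ≤ 𝔼 N = |S| 2^{-k}` and Chebyshev gives `P(N = 0) ≤ Var N / (𝔼 N)² ≤ 2^k / |S|`.
Taking `k = ⌊log |S| + λ⌋ + 1`, resp. `k = ⌈log |S| - λ⌉`, gives both tails with `C = 2`.
-/

open Finset

lemma lsb_le {m x : ℕ} (hx : x < 2 ^ m) : lsb m x ≤ m := by
  unfold lsb
  split_ifs with h
  · rfl
  · exact (Nat.pow_lt_pow_iff_right one_lt_two).mp
      ((Nat.le_of_dvd (Nat.pos_of_ne_zero h) pow_padicValNat_dvd).trans_lt hx) |>.le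

lemma le_lsb_iff_two_pow_dvd {m k : ℕ} (hk : k ≤ m) (x : ℕ) : k ≤ lsb m x ↔ 2 ^ k ∣ x := by
  have : Fact (Nat.Prime 2) := ⟨Nat.prime_two⟩
  unfold lsb
  split_ifs with h
  · simp [h, hk]
  · exact (padicValNat_dvd_iff_le h).symm

lemma card_filter_le_lsb {m k : ℕ} (hk : k ≤ m) :
    #{x : Fin (2 ^ m) | k ≤ lsb m x} = 2 ^ (m - k) := by
  have hsplit : 2 ^ m = 2 ^ (m - k) * 2 ^ k := by rw [← pow_add, Nat.sub_add_cancel hk]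
  have hpos : 0 < 2 ^ k := by positivity
  rw [← Fintype.card_fin (2 ^ (m - k)), ← card_univ]
  refine card_nbij'
    (fun x => ⟨x / 2 ^ k, Nat.div_lt_of_lt_mul (by rw [mul_comm, ← hsplit]; exact x.isLt)⟩)
    (fun i => ⟨i * 2 ^ k, hsplit ▸ Nat.mul_lt_mul_of_pos_right i.isLt hpos⟩) ?_ ?_ ?_ ?_
  · simp
  · simp [le_lsb_iff_two_pow_dvd hk]
  · intro x hx
    simp only [coe_filter, mem_univ, true_and, Set.mem_ofPred, le_lsb_iff_two_pow_dvd hk] at hx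
    exact Fin.ext (Nat.div_mul_cancel hx)
  · intro i _
    exact Fin.ext (Nat.mul_div_cancel _ hpos)

section Probability

variable {Ω : Type*} [MeasurableSpace Ω] {μ : Measure Ω}

lemma measure_preimage_finset_eq_card_mul {α : Type*} [MeasurableSpace α]
    [MeasurableSingletonClass α] {X : Ω → α} (hX : Measurable X) {c : ENNReal}
    (hc : ∀ x, μ {ω | X ω = x} = c) (T : Finset α) : μ (X ⁻¹' T) = #T * c := by
  rw [← sum_measure_preimage_singleton T (fun x _ => hX (measurableSet_singleton x))]
  simp [Set.preimage, hc]

lemma indepFun_of_measure_eq_mul {α β : Type*} [MeasurableSpace α] [MeasurableSpace β]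
    [Countable α] [Countable β] [DiscreteMeasurableSpace α] [DiscreteMeasurableSpace β]
    [IsFiniteMeasure μ] {X : Ω → α} {Y : Ω → β} (hX : Measurable X) (hY : Measurable Y)
    (h : ∀ x y, μ {ω | X ω = x ∧ Y ω = y} = μ {ω | X ω = x} * μ {ω | Y ω = y}) :
    X ⟂ᵢ[μ] Y := by
  rw [indepFun_iff_map_prod_eq_prod_map_map hX.aemeasurable hY.aemeasurable,
    Measure.ext_iff_singleton]
  rintro ⟨x, y⟩
  rw [Measure.map_apply (hX.prodMk hY) (.of_discrete), ← Set.singleton_prod_singleton,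
    Measure.prod_prod, Measure.map_apply hX (.of_discrete), Measure.map_apply hY (.of_discrete)]
  exact h x y

theorem measure_biInter_compl_le_of_pairwise_indepFun [IsProbabilityMeasure μ] {ι : Type*}
    {A : ι → Set Ω} {S : Finset ι} (hA : ∀ s ∈ S, MeasurableSet (A s))
    (hindep : (S : Set ι).Pairwise fun s t =>
      (A s).indicator (1 : Ω → ℝ) ⟂ᵢ[μ] (A t).indicator (1 : Ω → ℝ))
    (hpos : 0 < ∑ s ∈ S, μ.real (A s)) :
    μ (⋂ s ∈ S, (A s)ᶜ) ≤ ENNReal.ofReal (∑ s ∈ S, μ.real (A s))⁻¹ := by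
  set a := ∑ s ∈ S, μ.real (A s)
  set N : Ω → ℝ := ∑ s ∈ S, (A s).indicator (1 : Ω → ℝ)
  have hmemLp : ∀ s ∈ S, MemLp ((A s).indicator (1 : Ω → ℝ)) 2 μ :=
    fun s hs => (memLp_const 1).indicator (hA s hs)
  have hmean : μ[N] = a := by
    simp only [N, Finset.sum_apply]
    rw [integral_finsetSum _ fun s hs => (hmemLp s hs).integrable one_le_two]
    exact sum_congr rfl fun s hs => integral_indicator_one (hA s hs)
  have hvar : variance N μ ≤ a := by
    rw [IndepFun.variance_sum hmemLp hindep]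
    refine sum_le_sum fun s hs => (variance_le_expectation_sq
      (hmemLp s hs).aestronglyMeasurable).trans_eq ?_
    rw [← integral_indicator_one (hA s hs)]
    congr 1
    ext ω
    by_cases h : ω ∈ A s <;> simp [h]
  have hsub : ⋂ s ∈ S, (A s)ᶜ ⊆ {ω | a ≤ |N ω - μ[N]|} := by
    intro ω hω
    simp only [Set.mem_iInter, Set.mem_compl_iff] at hω
    have hN : N ω = 0 := by
      simp only [N, Finset.sum_apply]
      exact sum_eq_zero fun s hs => Set.indicator_of_notMem (hω s hs) _
    simp [hN, hmean, abs_of_pos hpos]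
  calc μ (⋂ s ∈ S, (A s)ᶜ) ≤ μ {ω | a ≤ |N ω - μ[N]|} := measure_mono hsub
    _ ≤ ENNReal.ofReal (variance N μ / a ^ 2) :=
      meas_ge_le_variance_div_sq (memLp_finsetSum' S hmemLp) hpos
    _ ≤ ENNReal.ofReal a⁻¹ := by
      refine ENNReal.ofReal_le_ofReal ((div_le_div_of_nonneg_right hvar (sq_nonneg a)).trans_eq ?_)
      field_simp

section Hashing

variable {ι : Type*} {m : ℕ} {H : ι → Ω → Fin (2 ^ m)}

def maxLsb (m : ℕ) (H : ι → Ω → Fin (2 ^ m)) (S : Finset ι) (ω : Ω) : ℕ :=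
  S.sup fun s => lsb m (H s ω)

lemma measure_le_lsb_eq {X : Ω → Fin (2 ^ m)} (hX : Measurable X)
    (hunif : ∀ x, μ {ω | X ω = x} = (2 ^ m)⁻¹) {k : ℕ} (hk : k ≤ m) :
    μ {ω | k ≤ lsb m (X ω)} = (2 ^ k)⁻¹ := by
  have hpreimage :
      {ω | k ≤ lsb m (X ω)} = X ⁻¹' ↑({x | k ≤ lsb m x} : Finset (Fin (2 ^ m))) := by
    ext; simp
  have hsplit : (2 : ENNReal) ^ m = 2 ^ (m - k) * 2 ^ k := by
    rw [← pow_add, Nat.sub_add_cancel hk]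
  rw [hpreimage, measure_preimage_finset_eq_card_mul hX hunif, card_filter_le_lsb hk, hsplit,
    ENNReal.mul_inv (by simp) (by simp), Nat.cast_pow, Nat.cast_ofNat, ← mul_assoc,
    ENNReal.mul_inv_cancel (by simp) (by simp), one_mul]

lemma measure_le_lsb_le {X : Ω → Fin (2 ^ m)} (hX : Measurable X)
    (hunif : ∀ x, μ {ω | X ω = x} = (2 ^ m)⁻¹) (k : ℕ) :
    μ {ω | k ≤ lsb m (X ω)} ≤ (2 ^ k)⁻¹ := by
  rcases le_or_gt k m with hk | hk
  · exact (measure_le_lsb_eq hX hunif hk).le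
  · have hempty : {ω | k ≤ lsb m (X ω)} = ∅ :=
      Set.eq_empty_of_forall_notMem fun ω hω => (lsb_le (X ω).isLt).not_gt (hk.trans_le hω)
    simp [hempty]

lemma indepFun_of_pairwise_uniform [IsFiniteMeasure μ] (hH : ∀ s, Measurable (H s))
    (hunif : ∀ s x, μ {ω | H s ω = x} = (2 ^ m)⁻¹)
    (hpair : ∀ s s', s ≠ s' → ∀ x y, μ {ω | H s ω = x ∧ H s' ω = y} = (2 ^ m * 2 ^ m)⁻¹)
    {s s' : ι} (hss' : s ≠ s') : H s ⟂ᵢ[μ] H s' :=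
  indepFun_of_measure_eq_mul (hH s) (hH s') fun x y => by
    rw [hpair s s' hss', hunif, hunif, ENNReal.mul_inv (by simp) (by simp)]

lemma measure_lt_maxLsb_le (hH : ∀ s, Measurable (H s))
    (hunif : ∀ s x, μ {ω | H s ω = x} = (2 ^ m)⁻¹) (S : Finset ι) {t : ℝ} (ht : 0 ≤ t) :
    μ {ω | t < maxLsb m H S ω} ≤ ENNReal.ofReal (#S * 2 ^ (-t)) := by
  set k := ⌊t⌋₊ + 1
  have hsub : {ω | t < maxLsb m H S ω} ⊆ ⋃ s ∈ S, {ω | k ≤ lsb m (H s ω)} := by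
    intro ω hω
    obtain ⟨s, hs, hlt⟩ := Finset.lt_sup_iff.mp ((Nat.floor_lt ht).mpr hω)
    exact Set.mem_biUnion hs hlt
  have htk : (2 ^ k : ℝ)⁻¹ ≤ 2 ^ (-t) := by
    rw [rpow_neg zero_le_two, ← rpow_natCast]
    exact inv_anti₀ (by positivity)
      (rpow_le_rpow_of_exponent_le one_le_two (by push_cast [k]; exact (Nat.lt_floor_add_one t).le))
  calc μ {ω | t < maxLsb m H S ω}
      ≤ ∑ s ∈ S, μ {ω | k ≤ lsb m (H s ω)} :=
        (measure_mono hsub).trans (measure_biUnion_finset_le _ _)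
    _ ≤ ∑ _s ∈ S, (2 ^ k)⁻¹ := sum_le_sum fun s _ => measure_le_lsb_le (hH s) (hunif s) k
    _ = ENNReal.ofReal (#S * (2 ^ k : ℝ)⁻¹) := by
      rw [sum_const, nsmul_eq_mul, ENNReal.ofReal_mul (Nat.cast_nonneg _), ENNReal.ofReal_natCast,
        ENNReal.ofReal_inv_of_pos (by positivity), ENNReal.ofReal_pow zero_le_two,
        ENNReal.ofReal_ofNat]
    _ ≤ ENNReal.ofReal (#S * 2 ^ (-t)) :=
      ENNReal.ofReal_le_ofReal (mul_le_mul_of_nonneg_left htk (Nat.cast_nonneg _))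

lemma measure_maxLsb_lt_le [IsProbabilityMeasure μ] (hH : ∀ s, Measurable (H s))
    (hunif : ∀ s x, μ {ω | H s ω = x} = (2 ^ m)⁻¹)
    (hpair : ∀ s s', s ≠ s' → ∀ x y, μ {ω | H s ω = x ∧ H s' ω = y} = (2 ^ m * 2 ^ m)⁻¹)
    {S : Finset ι} (hS : S.Nonempty) {t : ℝ} (ht : t ≤ m) :
    μ {ω | (maxLsb m H S ω : ℝ) < t} ≤ ENNReal.ofReal (2 ^ (t + 1) / #S) := by
  rcases le_or_gt t 0 with ht0 | ht0
  · have hempty : {ω | (maxLsb m H S ω : ℝ) < t} = ∅ :=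
      Set.eq_empty_of_forall_notMem fun ω hω => (ht0.trans (Nat.cast_nonneg _)).not_gt hω
    simp [hempty]
  set k := ⌈t⌉₊
  set T : Set (Fin (2 ^ m)) := {x | k ≤ lsb m x}
  set A : ι → Set Ω := fun s => H s ⁻¹' T
  have hA : ∀ s, MeasurableSet (A s) := fun s => hH s .of_discrete
  have hsum : ∑ s ∈ S, μ.real (A s) = #S * (2 ^ k : ℝ)⁻¹ := by
    have hprob (s : ι) : μ.real (A s) = (2 ^ k : ℝ)⁻¹ := by
      rw [measureReal_def, show A s = {ω | k ≤ lsb m (H s ω)} from rfl,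
        measure_le_lsb_eq (hH s) (hunif s) (Nat.ceil_le.mpr ht), ENNReal.toReal_inv,
        ENNReal.toReal_pow, ENNReal.toReal_ofNat]
    simp [hprob]
  have hsub : {ω | (maxLsb m H S ω : ℝ) < t} ⊆ ⋂ s ∈ S, (A s)ᶜ := by
    intro ω hω
    have hlt : maxLsb m H S ω < k := by exact_mod_cast hω.trans_le (Nat.le_ceil t)
    simpa [A, T] using (Finset.sup_lt_iff (Nat.ceil_pos.mpr ht0)).mp hlt
  have hindep : (S : Set ι).Pairwise fun s s' =>
      (A s).indicator (1 : Ω → ℝ) ⟂ᵢ[μ] (A s').indicator (1 : Ω → ℝ) := fun s _ s' _ hss' =>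
    (indepFun_of_pairwise_uniform hH hunif hpair hss').comp
      (φ := T.indicator 1) (ψ := T.indicator 1) .of_discrete .of_discrete
  have hpos : 0 < ∑ s ∈ S, μ.real (A s) := by
    rw [hsum]
    exact mul_pos (by exact_mod_cast hS.card_pos) (by positivity)
  refine (measure_mono hsub).trans
    ((measure_biInter_compl_le_of_pairwise_indepFun (fun s _ => hA s) hindep hpos).trans ?_)
  refine ENNReal.ofReal_le_ofReal ?_
  rw [hsum, mul_inv, inv_inv, ← div_eq_inv_mul, ← rpow_natCast]
  exact div_le_div_of_nonneg_right
    (rpow_le_rpow_of_exponent_le one_le_two (Nat.ceil_lt_add_one ht0.le).le) (Nat.cast_nonneg _)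

end Hashing

end Probability

/-- Tail bounds for the Flajolet–Martin estimator error
`Ŷ = max_{s ∈ S} lsb(h(s)) - log₂ |S|` with a pairwise independent hash family:
both `P(Ŷ > λ)` and `P(Ŷ < -λ)` are at most `C 2^{-λ}`. -/
theorem fm_estimator_tails :
    ∃ C : ℝ, 0 < C ∧
      ∀ (Ω : Type) (_ : MeasureSpace Ω) (_ : IsProbabilityMeasure (ℙ : Measure Ω))
        (m : ℕ) (H : Fin (2 ^ m) → Ω → Fin (2 ^ m)),
        (∀ s, Measurable (H s)) →
        (∀ s x, ℙ {ω | H s ω = x} = ((2 ^ m : ENNReal))⁻¹) →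
        (∀ s s', s ≠ s' → ∀ x y,
          ℙ {ω | H s ω = x ∧ H s' ω = y} = ((2 ^ m * 2 ^ m : ENNReal))⁻¹) →
        ∀ S : Finset (Fin (2 ^ m)), S.Nonempty →
          ∀ Y : Ω → ℝ,
            (∀ ω, Y ω =
              ((S.sup fun s => lsb m (H s ω).val : ℕ) : ℝ) - Real.logb 2 S.card) →
            ∀ lam : ℝ, 0 ≤ lam →
              ℙ {ω | lam < Y ω} ≤ ENNReal.ofReal (C * (2 : ℝ) ^ (-lam)) ∧
              ℙ {ω | Y ω < -lam} ≤ ENNReal.ofReal (C * (2 : ℝ) ^ (-lam)) := by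
  refine ⟨2, two_pos, fun Ω _ _ m H hH hunif hpair S hS Y hY lam hlam => ?_⟩
  set L := logb 2 #S
  have hcard : (0 : ℝ) < #S := by exact_mod_cast hS.card_pos
  have hL : 2 ^ L = (#S : ℝ) := rpow_logb two_pos (by norm_num) hcard
  have hL0 : 0 ≤ L := logb_nonneg one_lt_two (by exact_mod_cast hS.card_pos)
  have hLm : L ≤ m := by
    rw [logb_le_iff_le_rpow one_lt_two hcard, rpow_natCast]
    exact_mod_cast (card_le_univ S).trans_eq (Fintype.card_fin _)
  obtain rfl : Y = fun ω => (maxLsb m H S ω : ℝ) - L := funext hY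
  constructor
  · calc ℙ {ω | lam < (maxLsb m H S ω : ℝ) - L}
        = ℙ {ω | L + lam < maxLsb m H S ω} := by congr! 3; constructor <;> intro <;> linarith
      _ ≤ ENNReal.ofReal (#S * 2 ^ (-(L + lam))) :=
        measure_lt_maxLsb_le hH hunif S (add_nonneg hL0 hlam)
      _ ≤ ENNReal.ofReal (2 * 2 ^ (-lam)) := by
        refine ENNReal.ofReal_le_ofReal ?_
        rw [neg_add, rpow_add two_pos, rpow_neg zero_le_two, hL, ← mul_assoc,
          mul_inv_cancel₀ hcard.ne']
        linarith [rpow_pos_of_pos two_pos (-lam)]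
  · calc ℙ {ω | (maxLsb m H S ω : ℝ) - L < -lam}
        = ℙ {ω | (maxLsb m H S ω : ℝ) < L - lam} := by congr! 3; constructor <;> intro <;> linarith
      _ ≤ ENNReal.ofReal (2 ^ (L - lam + 1) / #S) :=
        measure_maxLsb_lt_le hH hunif hpair hS (by linarith)
      _ = ENNReal.ofReal (2 * 2 ^ (-lam)) := by
        rw [sub_eq_add_neg, add_comm L, add_assoc, rpow_add two_pos, rpow_add two_pos, hL, rpow_one]
        field_simp
end

section
/- Let X_1, …, X_R be [K]-valued random variables that are r-wise independent with each X_i uniform on [K], where R ≤ K/20, and let B_j = #{i : X_i = j} for j ∈ [K] and M = max_j B_j. Then for λ > 2, P(M > λ) ≤ R · exp(-c·min(λ, r)·log λ) for a universal constant c. -/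
open MeasureTheory ProbabilityTheory Real
open scoped ProbabilityTheory

/-- `X` is `r`-wise independent: any `r` of the variables are mutually independent. -/
def RWiseIndep {Ω : Type*} [MeasureSpace Ω] {R K : ℕ} (r : ℕ)
    (X : Fin R → Ω → Fin K) : Prop :=
  ∀ s : Finset (Fin R), s.card ≤ r →
    iIndepFun (fun i : s => X i) ℙ

/-!
Binomial moment method. If a bin receives `B` balls, `C(B, t)` counts the `t`-sets of balls that
all land in it; for `t ≤ r` each such set does so with probability `K⁻ᵗ`, so
`E[C(B, t)] = C(R, t) K⁻ᵗ`, and Markov's inequality gives `P(B ≥ L) ≤ C(R, t) K⁻ᵗ / C(L, t)`.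
Take `L = ⌊λ⌋ + 1` and `t = min(⌈L/2⌉, r)`. A union bound over the `K` bins together with
`C(R, t) / C(L, t) ≤ (R / (L + 1 - t))ᵗ` and `L + 1 - t ≥ (λ + 1) / 2 ≥ √λ` yields
`P(M > λ) ≤ R (R/K)ᵗ⁻¹ λ^(-t/2) ≤ R λ^(-t/2)`, and `2t ≥ min(λ, r)`, so `c = 1/4` works.
-/

open Finset

section Load

variable {Ω ι β : Type*} [Fintype ι] [DecidableEq β]

def binLoad (X : ι → Ω → β) (j : β) (ω : Ω) : ℕ := #{i | X i ω = j}

def maxLoad [Fintype β] (X : ι → Ω → β) (ω : Ω) : ℕ := univ.sup (binLoad X · ω)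

lemma maxLoad_le_card [Fintype β] (X : ι → Ω → β) (ω : Ω) : maxLoad X ω ≤ Fintype.card ι :=
  Finset.sup_le fun _ _ => card_filter_le _ _

end Load

lemma choose_mul_measure_le_card_le_sum {Ω ι : Type*} [MeasurableSpace Ω] [Fintype ι]
    (μ : Measure Ω) (F : Ω → Finset ι) (hF : ∀ S, MeasurableSet {ω | S ⊆ F ω}) (t L : ℕ) :
    L.choose t * μ {ω | L ≤ #(F ω)} ≤ ∑ S ∈ univ.powersetCard t, μ {ω | S ⊆ F ω} := by
  classical
  set f : Ω → ENNReal := fun ω => ∑ S ∈ univ.powersetCard t, {ω | S ⊆ F ω}.indicator 1 ω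
  have hf : Measurable f := Finset.measurable_sum _ fun S _ => measurable_one.indicator (hF S)
  have hchoose (ω : Ω) : ((#(F ω)).choose t : ENNReal) ≤ f ω := by
    have hcount : #((F ω).powersetCard t) ≤ #{S ∈ univ.powersetCard t | S ⊆ F ω} :=
      card_le_card fun S hS => mem_filter.2
        ⟨powersetCard_mono (subset_univ _) hS, (mem_powersetCard.1 hS).1⟩
    simp only [f, Set.indicator_apply, Set.mem_ofPred_eq, Pi.one_apply, sum_boole]
    rw [← card_powersetCard]
    exact_mod_cast hcount
  calc L.choose t * μ {ω | L ≤ #(F ω)}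
      ≤ L.choose t * μ {ω | (L.choose t : ENNReal) ≤ f ω} := by
        gcongr
        exact fun hω => (Nat.cast_le.2 (Nat.choose_le_choose t hω)).trans (hchoose ω)
    _ ≤ ∫⁻ ω, f ω ∂μ := mul_meas_ge_le_lintegral₀ hf.aemeasurable _
    _ = ∑ S ∈ univ.powersetCard t, μ {ω | S ⊆ F ω} := by
        rw [lintegral_finsetSum _ fun S _ => measurable_one.indicator (hF S)]
        simp only [lintegral_indicator_one (hF _)]

lemma measure_le_sup_le_sum {Ω β : Type*} [MeasurableSpace Ω] [Fintype β] (μ : Measure Ω)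
    (f : β → Ω → ℕ) {L : ℕ} (hL : 0 < L) :
    μ {ω | L ≤ univ.sup (f · ω)} ≤ ∑ j, μ {ω | L ≤ f j ω} := by
  refine (measure_mono fun ω hω => ?_).trans (measure_iUnion_fintype_le μ _)
  obtain ⟨j, -, hj⟩ := (Finset.le_sup_iff hL).1 hω
  exact Set.mem_iUnion.2 ⟨j, hj⟩

namespace RWiseIndep

variable {Ω : Type*} [MeasureSpace Ω] {R K r : ℕ} {X : Fin R → Ω → Fin K}

lemma measure_biInter_eq (hX : RWiseIndep r X)
    (hunif : ∀ i x, ℙ {ω | X i ω = x} = (K : ENNReal)⁻¹)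
    {S : Finset (Fin R)} (hS : #S ≤ r) (j : Fin K) :
    ℙ (⋂ i ∈ S, X i ⁻¹' {j}) = (K : ENNReal)⁻¹ ^ #S := by
  have h := (hX S hS).meas_iInter (s := fun i : S => X i ⁻¹' {j})
    fun i => ⟨{j}, measurableSet_singleton j, rfl⟩
  have hS' : ⋂ i ∈ S, X i ⁻¹' {j} = ⋂ i : S, X i ⁻¹' {j} := by ext; simp
  rw [hS', h]
  simp only [Set.preimage, Set.mem_singleton_iff, hunif, prod_const, card_univ, Fintype.card_coe]

lemma choose_mul_measure_le_binLoad_le (hmeas : ∀ i, Measurable (X i)) (hX : RWiseIndep r X)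
    (hunif : ∀ i x, ℙ {ω | X i ω = x} = (K : ENNReal)⁻¹)
    {t : ℕ} (htr : t ≤ r) (L : ℕ) (j : Fin K) :
    L.choose t * ℙ {ω | L ≤ binLoad X j ω} ≤ R.choose t * (K : ENNReal)⁻¹ ^ t := by
  have hsubset (S : Finset (Fin R)) :
      {ω | S ⊆ ({i | X i ω = j} : Finset (Fin R))} = ⋂ i ∈ S, X i ⁻¹' {j} := by
    ext ω; simp [Finset.subset_iff]
  refine (choose_mul_measure_le_card_le_sum ℙ (fun ω => ({i | X i ω = j} : Finset (Fin R)))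
    (fun S => ?_) t L).trans ?_
  · rw [hsubset]
    exact .biInter S.countable_toSet fun i _ => hmeas i (measurableSet_singleton j)
  · rw [sum_congr rfl fun S hS => by
      rw [hsubset, hX.measure_biInter_eq hunif ((mem_powersetCard.1 hS).2.trans_le htr) j,
        (mem_powersetCard.1 hS).2]]
    simp only [sum_const, card_powersetCard, card_univ, Fintype.card_fin, nsmul_eq_mul, le_refl]

lemma measure_le_maxLoad_le (hmeas : ∀ i, Measurable (X i)) (hX : RWiseIndep r X)
    (hunif : ∀ i x, ℙ {ω | X i ω = x} = (K : ENNReal)⁻¹) (hK : 0 < K)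
    {t L : ℕ} (htr : t ≤ r) (htL : t ≤ L) (hL : 0 < L) :
    ℙ {ω | L ≤ maxLoad X ω} ≤
      ENNReal.ofReal (K * R.choose t * (K : ℝ)⁻¹ ^ t / L.choose t) := by
  have hchoose : (L.choose t : ENNReal) ≠ 0 := by exact_mod_cast (Nat.choose_pos htL).ne'
  calc ℙ {ω | L ≤ maxLoad X ω} ≤ ∑ j, ℙ {ω | L ≤ binLoad X j ω} := measure_le_sup_le_sum _ _ hL
    _ ≤ ∑ _j : Fin K, R.choose t * (K : ENNReal)⁻¹ ^ t / L.choose t := by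
        refine sum_le_sum fun j _ => ?_
        rw [ENNReal.le_div_iff_mul_le (.inl hchoose) (.inl (ENNReal.natCast_ne_top _)), mul_comm]
        exact hX.choose_mul_measure_le_binLoad_le hmeas hunif htr L j
    _ = ENNReal.ofReal (K * R.choose t * (K : ℝ)⁻¹ ^ t / L.choose t) := by
        rw [ENNReal.ofReal_div_of_pos (by exact_mod_cast Nat.choose_pos htL)]
        simp [ENNReal.ofReal_mul, ENNReal.ofReal_pow, ENNReal.ofReal_inv_of_pos, hK, mul_assoc,
          mul_div_assoc, ENNReal.inv_pow]

end RWiseIndep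

lemma choose_div_choose_le (R L t : ℕ) (htL : t ≤ L) :
    (R.choose t : ℝ) / L.choose t ≤ R ^ t / ((L + 1 - t : ℕ) : ℝ) ^ t := by
  have hpos : (0 : ℝ) < ((L + 1 - t : ℕ) : ℝ) ^ t / t.factorial := by
    have : 0 < L + 1 - t := by omega
    positivity
  calc (R.choose t : ℝ) / L.choose t
      ≤ (R ^ t / t.factorial) / (((L + 1 - t : ℕ) : ℝ) ^ t / t.factorial) :=
        div_le_div₀ (by positivity) (Nat.choose_le_pow_div t R) hpos (Nat.pow_le_choose t L)
    _ = R ^ t / ((L + 1 - t : ℕ) : ℝ) ^ t := by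
        rw [div_div_div_cancel_right₀ (by positivity)]

lemma mul_choose_mul_inv_pow_div_choose_le {R K L t : ℕ} (hRK : R ≤ K) (hK : 0 < K)
    (ht : t ≠ 0) (htL : t ≤ L) :
    (K : ℝ) * R.choose t * (K : ℝ)⁻¹ ^ t / L.choose t ≤ R / ((L + 1 - t : ℕ) : ℝ) ^ t := by
  have hK' : (0 : ℝ) < K := by exact_mod_cast hK
  have hRK' : (R : ℝ) / K ≤ 1 := (div_le_one hK').2 (by exact_mod_cast hRK)
  calc (K : ℝ) * R.choose t * (K : ℝ)⁻¹ ^ t / L.choose t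
      = K * (K : ℝ)⁻¹ ^ t * (R.choose t / L.choose t) := by ring
    _ ≤ K * (K : ℝ)⁻¹ ^ t * (R ^ t / ((L + 1 - t : ℕ) : ℝ) ^ t) := by
        gcongr _ * ?_
        exact choose_div_choose_le R L t htL
    _ = K * (R / K) ^ t / ((L + 1 - t : ℕ) : ℝ) ^ t := by ring
    _ ≤ K * (R / K) / ((L + 1 - t : ℕ) : ℝ) ^ t := by
        gcongr; exact pow_le_of_le_one (by positivity) hRK' ht
    _ = R / ((L + 1 - t : ℕ) : ℝ) ^ t := by rw [mul_div_cancel₀ _ hK'.ne']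

lemma sqrt_le_add_one_sub {L t : ℕ} {lam : ℝ} (hlam : 0 ≤ lam) (hlamL : lam < L)
    (htL : 2 * t ≤ L + 1) : √lam ≤ ((L + 1 - t : ℕ) : ℝ) := by
  have hcast : ((L + 1 - t : ℕ) : ℝ) = L + 1 - t := by
    rw [Nat.cast_sub (by omega)]; push_cast; ring
  have htL' : (2 * t : ℝ) ≤ L + 1 := by exact_mod_cast htL
  -- `√λ ≤ (λ + 1) / 2` by AM-GM, and `(L + 1) / 2 ≤ L + 1 - t`
  nlinarith [Real.sq_sqrt hlam, sq_nonneg (√lam - 1)]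

lemma mul_choose_mul_inv_pow_div_choose_le_exp {R K L r t : ℕ} {lam : ℝ} (hRK : R ≤ K)
    (hK : 0 < K) (ht : t ≠ 0) (htL : 2 * t ≤ L + 1) (hlam : 1 < lam) (hlamL : lam < L)
    (hmin : min lam r ≤ 2 * t) :
    (K : ℝ) * R.choose t * (K : ℝ)⁻¹ ^ t / L.choose t ≤
      R * exp (-(1 / 4) * min lam r * log lam) := by
  have hsqrt : 0 < √lam := Real.sqrt_pos.2 (by linarith)
  calc (K : ℝ) * R.choose t * (K : ℝ)⁻¹ ^ t / L.choose t
      ≤ R / ((L + 1 - t : ℕ) : ℝ) ^ t := mul_choose_mul_inv_pow_div_choose_le hRK hK ht (by omega)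
    _ ≤ R / √lam ^ t := by
        gcongr; exact sqrt_le_add_one_sub (by linarith) hlamL htL
    _ = R * exp (-(t / 2) * log lam) := by
        rw [← exp_log hsqrt, ← exp_nat_mul, log_sqrt (by linarith), div_eq_mul_inv, ← exp_neg]
        ring_nf
    _ ≤ R * exp (-(1 / 4) * min lam r * log lam) := by
        gcongr _ * exp ?_
        nlinarith [log_pos hlam]

lemma measure_lt_maxLoad_le_card {Ω ι β : Type*} [MeasurableSpace Ω] [Fintype ι] [Fintype β]
    [DecidableEq β] (μ : Measure Ω) [IsProbabilityMeasure μ] (X : ι → Ω → β) {lam : ℝ}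
    (hlam : 0 ≤ lam) : μ {ω | lam < maxLoad X ω} ≤ Fintype.card ι := by
  rcases (Fintype.card ι).eq_zero_or_pos with h | h
  · have hempty : {ω | lam < maxLoad X ω} = ∅ := by
      ext ω
      have := maxLoad_le_card X ω
      simp only [Set.mem_ofPred_eq, Set.mem_empty_iff_false, iff_false, not_lt]
      exact le_of_eq_of_le (by exact_mod_cast Nat.eq_zero_of_le_zero (h ▸ this)) hlam
    simp [hempty]
  · exact prob_le_one.trans (by exact_mod_cast h)

/-- Max-load bound for `r`-wise independent balls into bins: throwing `R ≤ K/20`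
balls `r`-wise independently and uniformly into `K` bins, the max bin load `M`
satisfies `P(M > λ) ≤ R exp(-c min(λ,r) log λ)` for `λ > 2`. -/
theorem rwise_max_load_bound :
    ∃ c : ℝ, 0 < c ∧
      ∀ (Ω : Type) (_ : MeasureSpace Ω) (_ : IsProbabilityMeasure (ℙ : Measure Ω))
        (R K r : ℕ) (_ : 0 < K) (_ : 20 * R ≤ K)
        (X : Fin R → Ω → Fin K),
        (∀ i, Measurable (X i)) →
        RWiseIndep r X →
        (∀ i x, ℙ {ω | X i ω = x} = ((K : ENNReal))⁻¹) →
        ∀ M : Ω → ℕ,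
          (∀ ω, M ω = Finset.univ.sup fun j : Fin K =>
            (Finset.univ.filter fun i : Fin R => X i ω = j).card) →
          ∀ lam : ℝ, 2 < lam →
            ℙ {ω | lam < (M ω : ℝ)} ≤
              ENNReal.ofReal ((R : ℝ) *
                Real.exp (-c * min lam (r : ℝ) * Real.log lam)) := by
  refine ⟨1 / 4, by norm_num, fun Ω _ _ R K r hK hKR X hmeas hX hunif M hM lam hlam => ?_⟩
  obtain rfl : M = maxLoad X := funext hM
  have hlam0 : 0 ≤ lam := by linarith
  rcases r.eq_zero_or_pos with rfl | hr
  · rw [Nat.cast_zero, min_eq_right hlam0, mul_zero, zero_mul, exp_zero, mul_one,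
      ENNReal.ofReal_natCast]
    simpa using measure_lt_maxLoad_le_card ℙ X hlam0
  obtain ⟨L, hL⟩ : ∃ L, L = ⌊lam⌋₊ + 1 := ⟨_, rfl⟩
  have hlamL : lam < L := by simpa [hL] using Nat.lt_floor_add_one lam
  have hevent : {ω | lam < (maxLoad X ω : ℝ)} = {ω | L ≤ maxLoad X ω} := by
    ext ω
    simp only [Set.mem_ofPred_eq, ← Nat.floor_lt hlam0]
    omega
  obtain ⟨t, ht⟩ : ∃ t, t = min ((L + 1) / 2) r := ⟨_, rfl⟩
  have hmin : min lam r ≤ 2 * t := by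
    rcases min_cases ((L + 1) / 2) r with ⟨h, -⟩ | ⟨h, -⟩
    · have : (L : ℝ) ≤ 2 * t := by exact_mod_cast (show L ≤ 2 * t by omega)
      linarith [min_le_left lam r]
    · have : (r : ℝ) ≤ 2 * t := by exact_mod_cast (show r ≤ 2 * t by omega)
      linarith [min_le_right lam r]
  rw [hevent]
  refine (hX.measure_le_maxLoad_le (t := t) (L := L) hmeas hunif hK (by omega) (by omega)
    (by omega)).trans (ENNReal.ofReal_le_ofReal ?_)
  exact mul_choose_mul_inv_pow_div_choose_le_exp (by omega) hK (by omega) (by omega)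
    (by linarith) hlamL hmin
end

section
/- Let Γ : {0,1}^s × [w] → [M] satisfy: for every f : [M] → [0,1] and for Y_i = Γ(U,i) with U uniform, P(Σ_{i≤w} f(Y_i) > μγ) ≤ exp(-c·μγ·log min(γ, γ₀)) for all γ > 2, where μ = w·E_{X~Unif[M]} f(X), and each Y_i is marginally uniform (a γ₀-strong sampler with γ₀ ≥ exp(ln² w)). Then there is a universal constant C such that for every g : [M] → ℝ₊ with doubly-exponential tails P_{X~Unif[M]}(g(X) > λ) ≤ exp(-e^λ), we have P(Σ_{i≤w} g(Y_i) > C·w) ≤ exp(-Ω(w)). -/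
/-!
Split `g` into dyadic layers `{g > 4·2^k}`. Layer `k` has density `p_k ≤ exp (-exp (4·2^k))`, so
testing the sampler on its indicator with deviation ratio `γ = (c₀ / 4^k) / p_k ≥ exp (4^k)` (this
needs `γ₀ ≥ exp (4^k)`, which is why only the layers with `2^k ≤ log w` are used) shows that,
outside probability `exp (-c c₀ w)`, at most `c₀ w / 4^k` samples reach layer `k`; together these
layers contribute at most `8 c₀ w` to the sum. A sample above the top layer `4·2^n ≥ 4 log w`
occurs with probability at most `w · exp (-w⁴)`, by a union bound over the uniform marginals.
-/

open Real Finset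

section Counting

variable {α : Type*} [Fintype α]

lemma natCard_subtype_eq_card_filter (p : α → Prop) [DecidablePred p] :
    Nat.card {a // p a} = #{a | p a} :=
  Nat.subtype_card _ (by simp)

lemma natCard_subtype_mono {p q : α → Prop} (h : ∀ a, p a → q a) :
    Nat.card {a // p a} ≤ Nat.card {a // q a} := by
  classical
  simp only [natCard_subtype_eq_card_filter]
  exact card_le_card (monotone_filter_right _ fun a _ => h a)

lemma natCard_subtype_or_le (p q : α → Prop) :
    Nat.card {a // p a ∨ q a} ≤ Nat.card {a // p a} + Nat.card {a // q a} := by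
  classical
  simp only [natCard_subtype_eq_card_filter, filter_or]
  exact card_union_le _ _

lemma natCard_subtype_exists_mem_le_sum {κ : Type*} (t : Finset κ) (B : κ → α → Prop) :
    Nat.card {a // ∃ k ∈ t, B k a} ≤ ∑ k ∈ t, Nat.card {a // B k a} := by
  classical
  simp only [natCard_subtype_eq_card_filter]
  refine (card_le_card fun a ha => ?_).trans card_biUnion_le
  simpa using ha

end Counting

lemma min_le_add_sum_dyadic (y T : ℝ) (n : ℕ) :
    min y (T * 2 ^ n) ≤ T + ∑ k ∈ range n, T * 2 ^ k * if T * 2 ^ k < y then 1 else 0 := by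
  induction n with
  | zero => simp
  | succ n ih =>
    rw [sum_range_succ, ← add_assoc]
    refine le_trans ?_ (add_le_add_left ih _)
    split_ifs with h
    · rw [pow_succ, min_eq_right h.le]
      linarith [min_le_right y (T * (2 ^ n * 2))]
    · rw [min_eq_left (not_lt.mp h)]
      simp

lemma sum_le_of_levelCounts_le {ι : Type*} [Fintype ι] (y : ι → ℝ) {T b : ℝ} (hT : 0 ≤ T)
    (hb : 0 ≤ b) {n : ℕ} (hy : ∀ i, y i ≤ T * 2 ^ n)
    (hcount : ∀ k < n, ∑ i, (if T * 2 ^ k < y i then 1 else 0) ≤ b / (2 ^ k) ^ 2) :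
    ∑ i, y i ≤ T * Fintype.card ι + 2 * T * b := by
  calc ∑ i, y i
      ≤ ∑ i, (T + ∑ k ∈ range n, T * 2 ^ k * if T * 2 ^ k < y i then 1 else 0) := by
        gcongr with i
        simpa [min_eq_left (hy i)] using min_le_add_sum_dyadic (y i) T n
    _ = T * Fintype.card ι +
          ∑ k ∈ range n, T * 2 ^ k * ∑ i, (if T * 2 ^ k < y i then 1 else 0) := by
        simp only [sum_add_distrib, sum_const, card_univ, nsmul_eq_mul, mul_sum]
        rw [sum_comm]; ring
    _ ≤ T * Fintype.card ι + ∑ k ∈ range n, T * 2 ^ k * (b / (2 ^ k) ^ 2) := by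
        gcongr with k hk
        exact hcount k (mem_range.mp hk)
    _ = T * Fintype.card ι + T * b * ∑ k ∈ range n, (1 / 2 : ℝ) ^ k := by
        rw [mul_sum]
        congr 1
        refine sum_congr rfl fun k _ => ?_
        rw [one_div_pow]
        field_simp
    _ ≤ T * Fintype.card ι + 2 * T * b := by
        nlinarith [sum_geometric_two_le n, mul_nonneg hT hb]

lemma exp_neg_exp_four_mul_le {x : ℝ} (hx : 1 ≤ x) : exp (-exp (4 * x)) ≤ exp (-x ^ 2) / x ^ 2 := by
  have hsq : x ^ 2 ≤ exp (2 * x) := by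
    rw [show 2 * x = x + x by ring, exp_add, sq]
    have := add_one_le_exp x
    gcongr <;> linarith
  have hquad : x ^ 2 + 2 * x ≤ exp (4 * x) := by
    rw [show 4 * x = 2 * x + 2 * x by ring, exp_add]
    nlinarith [add_one_le_exp (2 * x)]
  rw [le_div_iff₀ (by positivity)]
  calc exp (-exp (4 * x)) * x ^ 2 ≤ exp (-exp (4 * x)) * exp (2 * x) := by gcongr
    _ = exp (-exp (4 * x) + 2 * x) := (exp_add _ _).symm
    _ ≤ exp (-x ^ 2) := by gcongr; linarith

lemma mul_exp_neg_exp_four_mul_le {w x : ℝ} (hw : 1 ≤ w) (hx : 1 ≤ x) (hwx : log w ≤ x) :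
    w * exp (-exp (4 * x)) ≤ exp (-(2 * w)) := by
  have hw_exp : w ≤ exp x := (le_exp_log w).trans (exp_le_exp.mpr hwx)
  have hlarge : 2 * w + log w ≤ exp (4 * x) := by
    rw [show 4 * x = x + 3 * x by ring, exp_add]
    nlinarith [add_one_le_exp (3 * x), log_le_sub_one_of_pos (by linarith : 0 < w)]
  calc w * exp (-exp (4 * x)) ≤ exp (log w) * exp (-(2 * w + log w)) := by
        rw [exp_log (by linarith)]; gcongr
    _ = exp (-(2 * w)) := by rw [← exp_add]; ring_nf

lemma exp_neg_two_mul_add_mul_exp_neg_three_mul_le {w n : ℝ} (hw : 1 ≤ w) (hn : n ≤ w) :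
    exp (-(2 * w)) + n * exp (-(3 * w)) ≤ exp (-w) :=
  calc exp (-(2 * w)) + n * exp (-(3 * w)) ≤ exp (-(2 * w)) + exp w * exp (-(3 * w)) := by
        gcongr; linarith [add_one_le_exp w]
    _ = 2 * exp (-(2 * w)) := by rw [← exp_add]; ring_nf
    _ ≤ exp w * exp (-(2 * w)) := by gcongr; linarith [add_one_le_exp w]
    _ = exp (-w) := by rw [← exp_add]; ring_nf

lemma exists_nat_le_and_log_le_two_pow {w : ℝ} (hw : 1 ≤ w) :
    ∃ n : ℕ, (n : ℝ) ≤ w ∧ log w ≤ 2 ^ n ∧ ∀ k < n, (2 : ℝ) ^ k ≤ log w := by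
  have hfloor : (⌊log w⌋₊ : ℝ) ≤ log w := Nat.floor_le (log_nonneg hw)
  refine ⟨Nat.size ⌊log w⌋₊, ?_, ?_, fun k hk => ?_⟩
  · calc (Nat.size ⌊log w⌋₊ : ℝ) ≤ ⌊log w⌋₊ := by
          exact_mod_cast Nat.size_le.mpr Nat.lt_two_pow_self
      _ ≤ log w := hfloor
      _ ≤ w := log_le_self (by linarith)
  · have : ((⌊log w⌋₊ + 1 : ℕ) : ℝ) ≤ (2 ^ Nat.size ⌊log w⌋₊ : ℕ) := by
      exact_mod_cast Nat.lt_size_self _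
    push_cast at this
    linarith [Nat.lt_floor_add_one (log w)]
  · calc (2 : ℝ) ^ k = (2 ^ k : ℕ) := by norm_cast
      _ ≤ ⌊log w⌋₊ := by exact_mod_cast Nat.lt_size.mp hk
      _ ≤ log w := hfloor

section Sampler

variable {Ω ι α : Type*} [Fintype Ω] [Fintype α]

def HasUniformMarginals (Y : Ω → ι → α) : Prop :=
  ∀ i x, Nat.card {u // Y u i = x} * Fintype.card α = Fintype.card Ω

def IsStrongSampler [Fintype ι] (c γ₀ : ℝ) (Y : Ω → ι → α) : Prop :=
  ∀ f : α → ℝ, (∀ x, 0 ≤ f x ∧ f x ≤ 1) → ∀ γ : ℝ, 2 < γ →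
    (Nat.card {u // (Fintype.card ι : ℝ) * ((∑ x, f x) / Fintype.card α) * γ <
        ∑ i, f (Y u i)} : ℝ) / Fintype.card Ω ≤
      exp (-c * ((Fintype.card ι : ℝ) * ((∑ x, f x) / Fintype.card α)) * γ * log (min γ γ₀))

def HasDoublyExpTails (g : α → ℝ) : Prop :=
  ∀ t : ℝ, 0 ≤ t → (Nat.card {x // t < g x} : ℝ) / Fintype.card α ≤ exp (-exp t)

namespace HasUniformMarginals

lemma natCard_comp_mul {Y : Ω → ι → α} (hY : HasUniformMarginals Y) (i : ι) (P : α → Prop) :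
    Nat.card {u // P (Y u i)} * Fintype.card α = Nat.card {x // P x} * Fintype.card Ω := by
  classical
  simp only [natCard_subtype_eq_card_filter]
  rw [card_eq_sum_card_fiberwise (f := (Y · i)) (t := {x | P x}) (fun u hu => by simpa using hu),
    sum_mul, card_eq_sum_ones, sum_mul, one_mul]
  refine sum_congr rfl fun x hx => ?_
  rw [filter_filter, ← hY i x, natCard_subtype_eq_card_filter]
  congr 2
  ext u
  simp only [mem_filter, mem_univ, true_and] at hx ⊢
  exact ⟨And.right, fun h => ⟨h ▸ hx, h⟩⟩

lemma natCard_exists_mul_le [Fintype ι] {Y : Ω → ι → α} (hY : HasUniformMarginals Y)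
    (P : α → Prop) :
    Nat.card {u // ∃ i, P (Y u i)} * Fintype.card α ≤
      Fintype.card ι * Nat.card {x // P x} * Fintype.card Ω :=
  calc Nat.card {u // ∃ i, P (Y u i)} * Fintype.card α
      ≤ (∑ i, Nat.card {u // P (Y u i)}) * Fintype.card α := by
        gcongr
        exact (natCard_subtype_mono (by simp)).trans (natCard_subtype_exists_mem_le_sum univ _)
    _ = Fintype.card ι * Nat.card {x // P x} * Fintype.card Ω := by
        simp [sum_mul, hY.natCard_comp_mul, mul_assoc]

lemma prob_exists_lt_le [Fintype ι] [Nonempty α] {Y : Ω → ι → α} (hY : HasUniformMarginals Y)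
    {g : α → ℝ} (hg : HasDoublyExpTails g) {t : ℝ} (ht : 0 ≤ t) :
    (Nat.card {u // ∃ i, t < g (Y u i)} : ℝ) / Fintype.card Ω ≤
      Fintype.card ι * exp (-exp t) := by
  have hα : (0 : ℝ) < Fintype.card α := by exact_mod_cast Fintype.card_pos
  have hunion : (Nat.card {u // ∃ i, t < g (Y u i)} : ℝ) * Fintype.card α ≤
      Fintype.card ι * Nat.card {x // t < g x} * Fintype.card Ω := by
    exact_mod_cast hY.natCard_exists_mul_le (t < g ·)
  have htail := (div_le_iff₀ hα).mp (hg t ht)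
  refine div_le_of_le_mul₀ (by positivity) (by positivity) (le_of_mul_le_mul_right ?_ hα)
  calc _ ≤ Fintype.card ι * Nat.card {x // t < g x} * (Fintype.card Ω : ℝ) := hunion
    _ ≤ Fintype.card ι * (exp (-exp t) * Fintype.card α) * Fintype.card Ω := by gcongr
    _ = _ := by ring

end HasUniformMarginals

lemma IsStrongSampler.prob_sum_indicator_gt_le [Fintype ι] {c γ₀ : ℝ} {Y : Ω → ι → α}
    (hY : IsStrongSampler c γ₀ Y) (hc : 0 ≤ c) (S : α → Prop) [DecidablePred S] {β L : ℝ}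
    (hβ : 0 < β) (hL : 1 ≤ L) (hLγ₀ : exp L ≤ γ₀)
    (hS : (Nat.card {x // S x} : ℝ) / Fintype.card α ≤ β * exp (-L)) :
    (Nat.card {u // β * Fintype.card ι < ∑ i, if S (Y u i) then 1 else 0} : ℝ) /
        Fintype.card Ω ≤ exp (-(c * β * Fintype.card ι * L)) := by
  set p := (Nat.card {x // S x} : ℝ) / Fintype.card α
  have hsum : ∑ x, (if S x then 1 else 0 : ℝ) = Nat.card {x // S x} := by
    rw [sum_boole, natCard_subtype_eq_card_filter]
  rcases (show 0 ≤ p by positivity).eq_or_lt with hp | hp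
  · have hS0 : ∀ x, ¬ S x := fun x hx => by
      have : 0 < Nat.card {x // S x} := Nat.card_pos_iff.mpr ⟨⟨⟨x, hx⟩⟩, inferInstance⟩
      have : 0 < Fintype.card α := Fintype.card_pos_iff.mpr ⟨x⟩
      have : 0 < p := by positivity
      linarith
    have hempty :
        Nat.card {u // β * Fintype.card ι < ∑ i, if S (Y u i) then (1 : ℝ) else 0} = 0 := by
      simp only [hS0, if_false, sum_const_zero, Nat.card_eq_zero]
      exact Or.inl ⟨fun u => u.2.not_ge (by positivity)⟩
    rw [hempty]
    simp only [Nat.cast_zero, zero_div]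
    positivity
  · -- Test the sampler with `γ = β / p`: then `μ γ = β |ι|` and `log γ ≥ L`.
    set γ := β / p
    have hγL : exp L ≤ γ := by
      rw [le_div_iff₀ hp, ← le_div_iff₀' (exp_pos L), div_eq_mul_inv, ← exp_neg]
      exact hS
    have h2L : 2 < exp L := by linarith [add_one_lt_exp (by linarith : L ≠ 0)]
    have hlog : L ≤ log (min γ γ₀) :=
      (le_log_iff_exp_le (lt_min (by linarith) (by linarith))).mpr (le_min hγL hLγ₀)
    have hμγ : (Fintype.card ι : ℝ) * ((∑ x, (if S x then 1 else 0 : ℝ)) / Fintype.card α) * γ =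
        β * Fintype.card ι := by
      rw [hsum]; change _ * p * (β / p) = _; field_simp
    have := hY (fun x => if S x then 1 else 0) (fun x => by split_ifs <;> norm_num) γ (by linarith)
    rw [hμγ] at this
    refine this.trans (exp_le_exp.mpr ?_)
    have hcβ : c * (β * Fintype.card ι) * L ≤ c * (β * Fintype.card ι) * log (min γ γ₀) := by
      gcongr
    linear_combination (-c * log (min γ γ₀)) * hμγ + hcβ

lemma IsStrongSampler.prob_levelCount_gt_le [Fintype ι] {c γ₀ : ℝ} {Y : Ω → ι → α}
    (hY : IsStrongSampler c γ₀ Y) (hc : 0 ≤ c) {g : α → ℝ} (hg : HasDoublyExpTails g)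
    {c₀ x : ℝ} (hc₀ : 1 ≤ c₀) (hx : 1 ≤ x) (hxγ₀ : exp (x ^ 2) ≤ γ₀) :
    (Nat.card {u // c₀ * Fintype.card ι / x ^ 2 <
        ∑ i, if 4 * x < g (Y u i) then 1 else 0} : ℝ) / Fintype.card Ω ≤
      exp (-(c * c₀ * Fintype.card ι)) := by
  have hx2 : 0 < x ^ 2 := by positivity
  have htail : (Nat.card {a // 4 * x < g a} : ℝ) / Fintype.card α ≤ c₀ / x ^ 2 * exp (-x ^ 2) :=
    calc _ ≤ exp (-exp (4 * x)) := hg _ (by positivity)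
      _ ≤ exp (-x ^ 2) / x ^ 2 := exp_neg_exp_four_mul_le hx
      _ ≤ c₀ * exp (-x ^ 2) / x ^ 2 := by gcongr; exact le_mul_of_one_le_left (exp_pos _).le hc₀
      _ = c₀ / x ^ 2 * exp (-x ^ 2) := by ring
  have := hY.prob_sum_indicator_gt_le hc (4 * x < g ·) (by positivity) (one_le_pow₀ hx) hxγ₀ htail
  convert this using 3 <;> field_simp

theorem IsStrongSampler.prob_sum_gt_le [Fintype ι] [Nonempty α] {c γ₀ : ℝ} {Y : Ω → ι → α}
    (hY : IsStrongSampler c γ₀ Y) (hU : HasUniformMarginals Y) (hc : 0 < c)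
    (hι : 0 < Fintype.card ι) (hγ₀ : exp (log (Fintype.card ι) ^ 2) ≤ γ₀)
    {g : α → ℝ} (hg : HasDoublyExpTails g) :
    (Nat.card {u // (4 + 8 * (3 / c + 1)) * Fintype.card ι < ∑ i, g (Y u i)} : ℝ) /
        Fintype.card Ω ≤ exp (-Fintype.card ι) := by
  have hw : (1 : ℝ) ≤ Fintype.card ι := by exact_mod_cast hι
  set w : ℝ := (Fintype.card ι : ℝ)
  set c₀ := 3 / c + 1
  have hc₀ : 1 ≤ c₀ := le_add_of_nonneg_left (div_pos three_pos hc).le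
  have hcc₀ : 3 ≤ c * c₀ := by simp only [c₀]; field_simp; linarith
  obtain ⟨n, hn, htop, hlevel⟩ := exists_nat_le_and_log_le_two_pow hw
  have hlevels : ∀ k ∈ range n, (Nat.card {u // c₀ * w / ((2 : ℝ) ^ k) ^ 2 <
      ∑ i, if 4 * 2 ^ k < g (Y u i) then 1 else 0} : ℝ) / Fintype.card Ω ≤ exp (-(3 * w)) :=
    fun k hk => by
    have hk := hlevel k (mem_range.mp hk)
    refine (hY.prob_levelCount_gt_le hc.le hg hc₀ (one_le_pow₀ one_le_two) ?_).trans ?_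
    · exact (exp_le_exp.mpr (pow_le_pow_left₀ (by positivity) hk 2)).trans hγ₀
    · exact exp_le_exp.mpr (by nlinarith)
  have hexceed : (Nat.card {u // ∃ i, 4 * 2 ^ n < g (Y u i)} : ℝ) / Fintype.card Ω ≤
      exp (-(2 * w)) :=
    (hU.prob_exists_lt_le hg (by positivity)).trans
      (mul_exp_neg_exp_four_mul_le hw (one_le_pow₀ one_le_two) htop)
  have hbad : ∀ u, (4 + 8 * c₀) * w < ∑ i, g (Y u i) → (∃ i, 4 * 2 ^ n < g (Y u i)) ∨
      ∃ k ∈ range n, c₀ * w / ((2 : ℝ) ^ k) ^ 2 < ∑ i, if 4 * 2 ^ k < g (Y u i) then 1 else 0 := by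
    intro u hu
    by_contra! h
    have := sum_le_of_levelCounts_le (fun i => g (Y u i)) (T := 4) (b := c₀ * w) (by norm_num)
      (by positivity) h.1 (fun k hk => h.2 k (mem_range.mpr hk))
    linarith
  calc _ ≤ ((Nat.card {u // ∃ i, 4 * 2 ^ n < g (Y u i)} : ℝ) +
          ∑ k ∈ range n, (Nat.card {u // c₀ * w / ((2 : ℝ) ^ k) ^ 2 <
            ∑ i, if 4 * 2 ^ k < g (Y u i) then 1 else 0} : ℝ)) / Fintype.card Ω := by
        gcongr
        rw [← Nat.cast_sum, ← Nat.cast_add, Nat.cast_le]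
        exact (natCard_subtype_mono hbad).trans ((natCard_subtype_or_le _ _).trans
          (add_le_add le_rfl (natCard_subtype_exists_mem_le_sum _ _)))
    _ ≤ exp (-(2 * w)) + ∑ k ∈ range n, exp (-(3 * w)) := by
        rw [add_div, sum_div]
        exact add_le_add hexceed (sum_le_sum hlevels)
    _ ≤ exp (-w) := by
        rw [sum_const, card_range, nsmul_eq_mul]
        exact exp_neg_two_mul_add_mul_exp_neg_three_mul_le hw hn

end Sampler

/-- A `γ₀`-strong sampler (with `γ₀ ≥ exp(ln² w)`) applied to a non-negative test
function with doubly-exponential tails: the sum of the sampled values exceeds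
`C w` with probability at most `exp(-Ω(w))` over the seed. Probabilities over
the seed space `{0,1}^s` and the universe `[M]` are expressed by counting. -/
theorem strong_sampler_handles_doubly_exponential_tails (c : ℝ) (hc : 0 < c) :
    ∃ C c' : ℝ, 0 < C ∧ 0 < c' ∧
      ∀ (s w M : ℕ), 0 < M → 0 < w →
        ∀ γ₀ : ℝ, Real.exp (Real.log w ^ 2) ≤ γ₀ →
        ∀ Γ : (Fin s → Bool) → Fin w → Fin M,
          -- each sample is marginally uniform on [M]
          (∀ (i : Fin w) (x : Fin M),
            (Nat.card {u : Fin s → Bool // Γ u i = x} : ℝ) * M = 2 ^ s) →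
          -- Chernoff-type strong-sampler bound for [0,1]-valued test functions
          (∀ f : Fin M → ℝ, (∀ x, 0 ≤ f x ∧ f x ≤ 1) →
            ∀ γ : ℝ, 2 < γ →
              (Nat.card {u : Fin s → Bool //
                  (w : ℝ) * ((∑ x, f x) / M) * γ < ∑ i, f (Γ u i)} : ℝ) / 2 ^ s ≤
                Real.exp (-c * ((w : ℝ) * ((∑ x, f x) / M)) * γ *
                  Real.log (min γ γ₀))) →
          -- conclusion: for every g ≥ 0 with doubly-exponential tails
          ∀ g : Fin M → ℝ, (∀ x, 0 ≤ g x) →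
            (∀ lam : ℝ, 0 ≤ lam →
              (Nat.card {x : Fin M // lam < g x} : ℝ) / M ≤
                Real.exp (-Real.exp lam)) →
            (Nat.card {u : Fin s → Bool // C * w < ∑ i, g (Γ u i)} : ℝ) / 2 ^ s ≤
              Real.exp (-c' * w) := by
  refine ⟨4 + 8 * (3 / c + 1), 1, by positivity, one_pos, ?_⟩
  intro s w M hM hw γ₀ hγ₀ Γ hunif hcher g _ htail
  have : Nonempty (Fin M) := ⟨⟨0, hM⟩⟩
  have hY : IsStrongSampler c γ₀ Γ := fun f hf γ hγ => by simpa using hcher f hf γ hγ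
  have hU : HasUniformMarginals Γ := fun i x => by
    have := hunif i x
    simp only [Fintype.card_fun, Fintype.card_bool, Fintype.card_fin]
    exact_mod_cast this
  have hg : HasDoublyExpTails g := fun t ht => by simpa using htail t ht
  simpa using hY.prob_sum_gt_le hU hc (by simpa using hw) (by simpa using hγ₀) hg
end
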